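/- arXiv:2405.12499 — 4 statements merged into one kernel-verified Lean document; each statement's English description precedes it below -/
import Mathlib

section
/- If an increasing sequence (u_j) of positive reals satisfies the lacunary condition (L) with constant A > 1 (i.e., u_m · Σ_{j≥m} 1/u_j ≤ A for all m ≥ 1), then for every real t ≠ 0, setting u_0 = 0, one has Σ_{j=1}^∞ max_{u_{j-1} ≤ v ≤ u_j} |∫_{u_{j-1}}^{v} sin(t·u)/u du| ≤ 3A + 4. -/
open Set Filter MeasureTheory Real
open scoped Topology ENNReal

noncomputable section

/-- Sum of absolute second-order rectangular increments of `f` over the grid `x`, `y`. -/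
def vitaliSum (f : ℝ → ℝ → ℝ) (x y : ℕ → ℝ) (n m : ℕ) : ℝ :=
  ∑ i ∈ Finset.range n, ∑ j ∈ Finset.range m,
    |f (x (i+1)) (y (j+1)) - f (x i) (y (j+1)) - f (x (i+1)) (y j) + f (x i) (y j)|

/-- Vitali variation of `f` over a set `Q ⊆ ℝ²`: the supremum, over compact rectangles
contained in `Q` and partitions of them, of the sum of absolute rectangular increments. -/
def vitaliVar (f : ℝ → ℝ → ℝ) (Q : Set (ℝ × ℝ)) : ℝ≥0∞ :=
  ⨆ (n : ℕ) (m : ℕ) (x : ℕ → ℝ) (y : ℕ → ℝ)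
    (_ : ∀ i < n, x i < x (i+1)) (_ : ∀ j < m, y j < y (j+1))
    (_ : Set.Icc (x 0) (x n) ×ˢ Set.Icc (y 0) (y m) ⊆ Q),
    ENNReal.ofReal (vitaliSum f x y n m)

/-- Bounded variation in the sense of Vitali over `ℝ²`. -/
def BVV (f : ℝ → ℝ → ℝ) : Prop := vitaliVar f Set.univ < ⊤

/-- Bounded variation in the sense of Hardy over `ℝ²`. -/
def BVH (f : ℝ → ℝ → ℝ) : Prop :=
  BVV f ∧ (∀ y, BoundedVariationOn (fun s => f s y) Set.univ) ∧
    (∀ x, BoundedVariationOn (fun s => f x s) Set.univ)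

/-- The space `BV_{||0||}(ℝ²)`: Vitali bounded variation and vanishing as `‖(x,y)‖ → ∞`. -/
def BVzero (f : ℝ → ℝ → ℝ) : Prop :=
  BVV f ∧ Tendsto (fun p : ℝ × ℝ => f p.1 p.2) (cocompact (ℝ × ℝ)) (𝓝 0)

/-- `x`, `y` form a partition of `[a,b] × [c,d]` with `n`, resp. `m`, subintervals. -/
def IsPartition (x y : ℕ → ℝ) (n m : ℕ) (a b c d : ℝ) : Prop :=
  x 0 = a ∧ x n = b ∧ y 0 = c ∧ y m = d ∧
    (∀ i < n, x i < x (i+1)) ∧ (∀ j < m, y j < y (j+1))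

/-- The tags `(ξ i j, η i j)` belong to the corresponding subrectangles. -/
def Tags (x y : ℕ → ℝ) (ξ η : ℕ → ℕ → ℝ) (n m : ℕ) : Prop :=
  ∀ i < n, ∀ j < m,
    ξ i j ∈ Set.Icc (x i) (x (i+1)) ∧ η i j ∈ Set.Icc (y j) (y (j+1))

/-- Riemann–Stieltjes sum of `g` with respect to `f`. -/
def RSSum (g f : ℝ → ℝ → ℝ) (x y : ℕ → ℝ) (ξ η : ℕ → ℕ → ℝ) (n m : ℕ) : ℝ :=
  ∑ i ∈ Finset.range n, ∑ j ∈ Finset.range m,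
    g (ξ i j) (η i j) *
      (f (x (i+1)) (y (j+1)) - f (x i) (y (j+1)) - f (x (i+1)) (y j) + f (x i) (y j))

/-- `g` is Riemann–Stieltjes integrable with respect to `f` over `[a,b] × [c,d]`,
with integral `A` (mesh measured by the diagonals of the subrectangles). -/
def RSIntegralOn (g f : ℝ → ℝ → ℝ) (a b c d A : ℝ) : Prop :=
  ∀ ε > 0, ∃ δ > 0, ∀ (n m : ℕ) (x y : ℕ → ℝ) (ξ η : ℕ → ℕ → ℝ),
    IsPartition x y n m a b c d → Tags x y ξ η n m →
    (∀ i < n, ∀ j < m, Real.sqrt ((x (i+1) - x i)^2 + (y (j+1) - y j)^2) < δ) →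
    |RSSum g f x y ξ η n m - A| < ε

/-- Improper Riemann–Stieltjes integral of `g` with respect to `f` over `ℝ²`,
as a Pringsheim limit over expanding compact rectangles. -/
def ImproperRS (g f : ℝ → ℝ → ℝ) (A : ℝ) : Prop :=
  ∀ ε > 0, ∃ M : ℝ, ∀ a b c d : ℝ, a ≤ -M → M ≤ b → c ≤ -M → M ≤ d →
    ∃ B : ℝ, RSIntegralOn g f a b c d B ∧ |B - A| < ε

/-- Improper Riemann–Stieltjes integral of a complex-valued `G` with respect to `f`,
defined via real and imaginary parts. -/
def ImproperRSC (G : ℝ → ℝ → ℂ) (f : ℝ → ℝ → ℝ) (A : ℂ) : Prop :=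
  ImproperRS (fun s t => (G s t).re) f A.re ∧ ImproperRS (fun s t => (G s t).im) f A.im

/-- Riemann sum of `f` over a tagged partition. -/
def KHSum (f : ℝ → ℝ → ℝ) (x y : ℕ → ℝ) (ξ η : ℕ → ℕ → ℝ) (n m : ℕ) : ℝ :=
  ∑ i ∈ Finset.range n, ∑ j ∈ Finset.range m,
    f (ξ i j) (η i j) * (x (i+1) - x i) * (y (j+1) - y j)

/-- The tagged partition is `δ`-fine for the gauge `δ`. -/
def KHFine (δ : ℝ × ℝ → ℝ) (x y : ℕ → ℝ) (ξ η : ℕ → ℕ → ℝ) (n m : ℕ) : Prop :=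
  ∀ i < n, ∀ j < m,
    Set.Icc (x i) (x (i+1)) ⊆
      Set.Ioo (ξ i j - δ (ξ i j, η i j)) (ξ i j + δ (ξ i j, η i j)) ∧
    Set.Icc (y j) (y (j+1)) ⊆
      Set.Ioo (η i j - δ (ξ i j, η i j)) (η i j + δ (ξ i j, η i j))

/-- `f` is Kurzweil–Henstock integrable over `[a,b] × [c,d]` with integral `A`. -/
def KHIntegralOn (f : ℝ → ℝ → ℝ) (a b c d A : ℝ) : Prop :=
  ∀ ε > 0, ∃ δ : ℝ × ℝ → ℝ, (∀ p, 0 < δ p) ∧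
    ∀ (n m : ℕ) (x y : ℕ → ℝ) (ξ η : ℕ → ℕ → ℝ),
      IsPartition x y n m a b c d → Tags x y ξ η n m → KHFine δ x y ξ η n m →
      |KHSum f x y ξ η n m - A| < ε

/-- Kurzweil–Henstock integrability of a complex-valued function, via components. -/
def KHIntegralOnC (f : ℝ → ℝ → ℂ) (a b c d : ℝ) (A : ℂ) : Prop :=
  KHIntegralOn (fun s t => (f s t).re) a b c d A.re ∧
  KHIntegralOn (fun s t => (f s t).im) a b c d A.im

/-- Pringsheim limit, over expanding compact rectangles, of Kurzweil–Henstock integrals. -/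
def HasKHPringsheim (f : ℝ → ℝ → ℝ) (A : ℝ) : Prop :=
  ∀ ε > 0, ∃ M : ℝ, ∀ a b c d : ℝ, a ≤ -M → M ≤ b → c ≤ -M → M ≤ d →
    ∃ B : ℝ, KHIntegralOn f a b c d B ∧ |B - A| < ε

/-- Complex-valued Pringsheim limit of Kurzweil–Henstock integrals. -/
def HasKHPringsheimC (f : ℝ → ℝ → ℂ) (A : ℂ) : Prop :=
  ∀ ε > 0, ∃ M : ℝ, ∀ a b c d : ℝ, a ≤ -M → M ≤ b → c ≤ -M → M ≤ d →
    ∃ B : ℂ, KHIntegralOnC f a b c d B ∧ ‖B - A‖ < ε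

/-- The kernel `e^{-i(ξ t₁ + η t₂)}`. -/
def fourierKernel (ξ η t₁ t₂ : ℝ) : ℂ :=
  Complex.exp (-Complex.I * ((ξ * t₁ + η * t₂ : ℝ) : ℂ))

/-- `A` is the KP-Fourier transform of `f` at `(ξ, η)`. -/
def HasKPFourier (f : ℝ → ℝ → ℝ) (ξ η : ℝ) (A : ℂ) : Prop :=
  HasKHPringsheimC (fun t₁ t₂ => (f t₁ t₂ : ℂ) * fourierKernel ξ η t₁ t₂) A

/-- The region `{(ξ,η) : α₁ ≤ |ξ| ≤ β₁, α₂ ≤ |η| ≤ β₂}`. -/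
def annulusRect (α₁ β₁ α₂ β₂ : ℝ) : Set (ℝ × ℝ) :=
  {p | α₁ ≤ |p.1| ∧ |p.1| ≤ β₁ ∧ α₂ ≤ |p.2| ∧ |p.2| ≤ β₂}

/-- The kernel `(sin(βt) - sin(αt))/t`, extended by continuity at `t = 0`. -/
def sinKernel (α β t : ℝ) : ℝ :=
  if t = 0 then β - α else (Real.sin (β * t) - Real.sin (α * t)) / t

/-- The kernel `h_{α,β}(t) = (sin(βt) - sin(αt))/(πt)`, extended by continuity at `t = 0`. -/
def sinKernelPi (α β t : ℝ) : ℝ :=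
  if t = 0 then (β - α) / π else (Real.sin (β * t) - Real.sin (α * t)) / (π * t)

/-- `g_{(x,y)}(t₁,t₂) = f(x−t₁,y−t₂) + f(x−t₁,y+t₂) + f(x+t₁,y−t₂) + f(x+t₁,y+t₂)`. -/
def quadSum (f : ℝ → ℝ → ℝ) (x y t₁ t₂ : ℝ) : ℝ :=
  f (x - t₁) (y - t₂) + f (x - t₁) (y + t₂) + f (x + t₁) (y - t₂) + f (x + t₁) (y + t₂)

/-!
Split the blocks `[u_{j-1}, u_j]` at the scale `1/|t|`. Below it, `|sin(tu)/u| ≤ |t|` bounds each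
block by `|t|` times its length, and these telescope to at most `1`. Above it, integration by
parts gives `|∫_a^v sin(tu)/u du| ≤ 2/(|t| a)`, so condition (L) at the first block above the
scale bounds the tail by `2A`. The single block containing `1/|t|` contributes at most `3`.
-/

def sinIntegralOsc (t a b : ℝ) : ℝ :=
  sSup ((fun v : ℝ => |∫ s in a..v, sin (t * s) / s|) '' Icc a b)

lemma exists_le_and_lt_succ_of_le_of_lt {α : Type*} [LinearOrder α] {u : ℕ → α} {c : α}
    (h0 : u 0 ≤ c) {n : ℕ} (hn : c < u n) : ∃ J < n, u J ≤ c ∧ c < u (J + 1) := by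
  induction n with
  | zero => exact absurd hn h0.not_gt
  | succ n ih =>
    by_cases h : c < u n
    · obtain ⟨J, hJn, hJ⟩ := ih h
      exact ⟨J, hJn.trans n.lt_succ_self, hJ⟩
    · exact ⟨n, n.lt_succ_self, not_lt.1 h, hn⟩

lemma Finset.sum_Ico_le_tsum_nat_add {f : ℕ → ℝ} {m : ℕ} (hf : Summable fun j => f (m + j))
    (hf0 : ∀ j, 0 ≤ f (m + j)) (n : ℕ) : ∑ j ∈ Finset.Ico m n, f j ≤ ∑' j, f (m + j) := by
  rw [Finset.sum_Ico_eq_sum_range]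
  exact hf.sum_le_tsum _ fun j _ => hf0 j

lemma abs_sin_mul_div_le (t s : ℝ) : |sin (t * s) / s| ≤ |t| := by
  rcases eq_or_ne s 0 with rfl | hs
  · simp
  rw [abs_div, div_le_iff₀ (abs_pos.2 hs), ← abs_mul]
  exact abs_sin_le_abs

lemma intervalIntegrable_sin_mul_div (t a b : ℝ) :
    IntervalIntegrable (fun s => sin (t * s) / s) volume a b :=
  (intervalIntegrable_const (c := |t|)).mono_fun'
    (by fun_prop : Measurable fun s => sin (t * s) / s).aestronglyMeasurable
    (ae_of_all _ fun s => abs_sin_mul_div_le t s)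

lemma abs_integral_sin_mul_div_le_mul (t a b : ℝ) :
    |∫ s in a..b, sin (t * s) / s| ≤ |t| * |b - a| := by
  simpa only [Real.norm_eq_abs] using
    intervalIntegral.norm_integral_le_of_norm_le_const (f := fun s => sin (t * s) / s)
      fun s _ => abs_sin_mul_div_le t s

lemma hasDerivAt_neg_cos_mul_div {t : ℝ} (ht : t ≠ 0) (x : ℝ) :
    HasDerivAt (fun x => -cos (t * x) / t) (sin (t * x)) x :=
  ((Real.hasDerivAt_cos (t * x)).comp x ((hasDerivAt_id x).const_mul t)).neg.div_const t
    |>.congr_deriv (by field_simp)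

lemma abs_mul_neg_cos_mul_div_le (t : ℝ) {c : ℝ} (hc : 0 ≤ c) (x : ℝ) :
    |c * (-cos (t * x) / t)| ≤ c / |t| := by
  rw [abs_mul, abs_div, abs_neg, abs_of_nonneg hc, mul_div_assoc']
  gcongr
  exact mul_le_of_le_one_right hc (abs_cos_le_one _)

lemma abs_integral_sin_mul_div_le_two_div {t a b : ℝ} (ht : t ≠ 0) (ha : 0 < a) (hab : a ≤ b) :
    |∫ s in a..b, sin (t * s) / s| ≤ 2 / (|t| * a) := by
  have hpos : ∀ x ∈ uIcc a b, 0 < x := fun x hx =>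
    ha.trans_le (by rw [uIcc_of_le hab] at hx; exact hx.1)
  have hinv : ∀ x ∈ uIcc a b, HasDerivAt (·⁻¹) (-(x ^ 2)⁻¹) x := fun x hx =>
    hasDerivAt_inv (hpos x hx).ne'
  have hsq : IntervalIntegrable (fun x => (x ^ 2)⁻¹) volume a b :=
    ContinuousOn.intervalIntegrable fun x hx =>
      ((continuousAt_id.pow 2).inv₀ (pow_ne_zero 2 (hpos x hx).ne')).continuousWithinAt
  have hinv' : IntervalIntegrable (fun x => -(x ^ 2)⁻¹) volume a b := hsq.neg
  have hparts := intervalIntegral.integral_mul_deriv_eq_deriv_mul hinv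
    (fun x _ => hasDerivAt_neg_cos_mul_div ht x) hinv'
    ((by fun_prop : Continuous fun x => sin (t * x)).intervalIntegrable a b)
  have hrest : |∫ x in a..b, -(x ^ 2)⁻¹ * (-cos (t * x) / t)| ≤ (a⁻¹ - b⁻¹) / |t| := by
    calc |∫ x in a..b, -(x ^ 2)⁻¹ * (-cos (t * x) / t)|
        ≤ ∫ x in a..b, (x ^ 2)⁻¹ / |t| := by
          refine intervalIntegral.norm_integral_le_of_norm_le
            (f := fun x => -(x ^ 2)⁻¹ * (-cos (t * x) / t)) (g := fun x => (x ^ 2)⁻¹ / |t|) hab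
            (ae_of_all _ fun x _ => ?_) (hsq.div_const _)
          rw [Real.norm_eq_abs, neg_mul, abs_neg]
          exact abs_mul_neg_cos_mul_div_le t (by positivity) x
      _ = (a⁻¹ - b⁻¹) / |t| := by
          rw [intervalIntegral.integral_div, ← neg_neg (∫ x in a..b, (x ^ 2)⁻¹),
            ← intervalIntegral.integral_neg,
            intervalIntegral.integral_eq_sub_of_hasDerivAt hinv hinv']
          ring
  have hb := abs_mul_neg_cos_mul_div_le t (inv_nonneg.2 (ha.le.trans hab)) b
  have ha' := abs_mul_neg_cos_mul_div_le t (inv_nonneg.2 ha.le) a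
  have hfun : (fun s => sin (t * s) / s) = fun s => s⁻¹ * sin (t * s) := by
    ext s; rw [div_eq_inv_mul]
  rw [hfun, hparts]
  calc _ ≤ b⁻¹ / |t| + a⁻¹ / |t| + (a⁻¹ - b⁻¹) / |t| := by
        exact (abs_sub _ _).trans (add_le_add ((abs_sub _ _).trans (add_le_add hb ha')) hrest)
    _ = 2 / (|t| * a) := by field_simp; ring

lemma abs_integral_sin_mul_div_le_three {t a v : ℝ} (ht : t ≠ 0) (ha : 0 ≤ a) (hav : a ≤ v) :
    |∫ s in a..v, sin (t * s) / s| ≤ 3 := by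
  have ht' : 0 < |t| := abs_pos.2 ht
  rcases le_or_gt v (1 / |t|) with hv | hv
  · calc |∫ s in a..v, sin (t * s) / s| ≤ |t| * |v - a| := abs_integral_sin_mul_div_le_mul t a v
      _ ≤ |t| * (1 / |t|) := by
          rw [abs_of_nonneg (sub_nonneg.2 hav)]; gcongr; linarith
      _ ≤ 3 := by rw [mul_one_div_cancel ht'.ne']; norm_num
  -- split at `w = max a (1/|t|)`: the piece below `w` has length at most `1/|t|`, the one above
  -- starts at or beyond the scale `1/|t|`
  set w := max a (1 / |t|)
  have hw : 0 < w := (one_div_pos.2 ht').trans_le (le_max_right _ _)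
  have hwv : w ≤ v := max_le hav hv.le
  rw [← intervalIntegral.integral_add_adjacent_intervals (intervalIntegrable_sin_mul_div t a w)
    (intervalIntegrable_sin_mul_div t w v)]
  have hlow : |∫ s in a..w, sin (t * s) / s| ≤ 1 := by
    calc |∫ s in a..w, sin (t * s) / s| ≤ |t| * |w - a| := abs_integral_sin_mul_div_le_mul t a w
      _ ≤ |t| * (1 / |t|) := by
          rw [abs_of_nonneg (sub_nonneg.2 (le_max_left _ _))]
          gcongr
          exact sub_le_iff_le_add.2 (max_le (by linarith [one_div_pos.2 ht']) (by linarith))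
      _ = 1 := mul_one_div_cancel ht'.ne'
  have hhigh : |∫ s in w..v, sin (t * s) / s| ≤ 2 := by
    calc |∫ s in w..v, sin (t * s) / s| ≤ 2 / (|t| * w) :=
          abs_integral_sin_mul_div_le_two_div ht hw hwv
      _ ≤ 2 := by
          refine div_le_self zero_le_two ?_
          calc (1 : ℝ) = |t| * (1 / |t|) := (mul_one_div_cancel ht'.ne').symm
            _ ≤ |t| * w := by gcongr; exact le_max_right _ _
  linarith [abs_add_le (∫ s in a..w, sin (t * s) / s) (∫ s in w..v, sin (t * s) / s)]

lemma sinIntegralOsc_le {t a b C : ℝ} (hab : a ≤ b)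
    (h : ∀ v ∈ Icc a b, |∫ s in a..v, sin (t * s) / s| ≤ C) : sinIntegralOsc t a b ≤ C :=
  csSup_le ((nonempty_Icc.2 hab).image _) (forall_mem_image.2 h)

lemma sinIntegralOsc_le_mul (t : ℝ) {a b : ℝ} (hab : a ≤ b) :
    sinIntegralOsc t a b ≤ |t| * (b - a) :=
  sinIntegralOsc_le hab fun v hv =>
    (abs_integral_sin_mul_div_le_mul t a v).trans <| by
      rw [abs_of_nonneg (sub_nonneg.2 hv.1)]; gcongr; exact hv.2

lemma sinIntegralOsc_le_two_div {t a b : ℝ} (ht : t ≠ 0) (ha : 0 < a) (hab : a ≤ b) :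
    sinIntegralOsc t a b ≤ 2 / (|t| * a) :=
  sinIntegralOsc_le hab fun _ hv => abs_integral_sin_mul_div_le_two_div ht ha hv.1

lemma sinIntegralOsc_le_three {t a b : ℝ} (ht : t ≠ 0) (ha : 0 ≤ a) (hab : a ≤ b) :
    sinIntegralOsc t a b ≤ 3 :=
  sinIntegralOsc_le hab fun _ hv => abs_integral_sin_mul_div_le_three ht ha hv.1

lemma sum_range_sinIntegralOsc_le (t : ℝ) {u : ℕ → ℝ} (hu : Monotone u) (n : ℕ) :
    ∑ j ∈ Finset.range n, sinIntegralOsc t (u j) (u (j + 1)) ≤ |t| * (u n - u 0) :=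
  calc ∑ j ∈ Finset.range n, sinIntegralOsc t (u j) (u (j + 1))
      ≤ ∑ j ∈ Finset.range n, |t| * (u (j + 1) - u j) :=
        Finset.sum_le_sum fun j _ => sinIntegralOsc_le_mul t (hu j.le_succ)
    _ = |t| * (u n - u 0) := by rw [← Finset.mul_sum, Finset.sum_range_sub]

lemma sum_Ico_sinIntegralOsc_le_of_lacunary {t A : ℝ} (ht : t ≠ 0) (hA : 0 ≤ A) {u : ℕ → ℝ}
    (hu : Monotone u) {m : ℕ} (hm : 1 ≤ |t| * u m) (hsum : Summable fun j => 1 / u (m + j))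
    (hL : u m * ∑' j, 1 / u (m + j) ≤ A) (n : ℕ) :
    ∑ j ∈ Finset.Ico m n, sinIntegralOsc t (u j) (u (j + 1)) ≤ 2 * A := by
  have ht' : 0 < |t| := abs_pos.2 ht
  have hum : 0 < u m := pos_of_mul_pos_right (one_pos.trans_le hm) ht'.le
  have hupos : ∀ j, m ≤ j → 0 < u j := fun j hj => hum.trans_le (hu hj)
  calc ∑ j ∈ Finset.Ico m n, sinIntegralOsc t (u j) (u (j + 1))
      ≤ ∑ j ∈ Finset.Ico m n, 2 / |t| * (1 / u j) := by
        refine Finset.sum_le_sum fun j hj => ?_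
        have hj := hupos j (Finset.mem_Ico.1 hj).1
        calc sinIntegralOsc t (u j) (u (j + 1)) ≤ 2 / (|t| * u j) :=
              sinIntegralOsc_le_two_div ht hj (hu j.le_succ)
          _ = 2 / |t| * (1 / u j) := by field_simp
    _ = 2 / |t| * ∑ j ∈ Finset.Ico m n, 1 / u j := by rw [Finset.mul_sum]
    _ ≤ 2 / |t| * (A / u m) := by
        gcongr
        refine (Finset.sum_Ico_le_tsum_nat_add (f := fun j => 1 / u j) hsum
          (fun j => (one_div_pos.2 (hupos _ (m.le_add_right j))).le) n).trans ?_
        rw [le_div_iff₀ hum, mul_comm]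
        exact hL
    _ = 2 * A / (|t| * u m) := by field_simp
    _ ≤ 2 * A := div_le_self (by positivity) hm

theorem stmt0_general (u : ℕ → ℝ) (h0 : u 0 = 0) (hmono : StrictMono u)
    (A : ℝ) (hA : 1 < A)
    (hsum : Summable fun j : ℕ => 1 / u (j + 1))
    (hL : ∀ m : ℕ, 1 ≤ m → u m * ∑' j : ℕ, 1 / u (m + j) ≤ A)
    (t : ℝ) (ht : t ≠ 0) :
    ∀ n : ℕ, ∑ j ∈ Finset.range n,
      sSup ((fun v : ℝ => |∫ s in (u j)..v, Real.sin (t * s) / s|) ''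
        Set.Icc (u j) (u (j + 1))) ≤ 3 * A + 4 := by
  intro n
  change ∑ j ∈ Finset.range n, sinIntegralOsc t (u j) (u (j + 1)) ≤ 3 * A + 4
  have ht' : 0 < |t| := abs_pos.2 ht
  have hu := hmono.monotone
  have hhead : ∀ m, u m ≤ 1 / |t| → ∑ j ∈ Finset.range m, sinIntegralOsc t (u j) (u (j + 1)) ≤ 1 :=
    fun m hm => (sum_range_sinIntegralOsc_le t hu m).trans <| by
      rw [h0, sub_zero]; exact (le_div_iff₀' ht').1 hm
  rcases le_or_gt (u n) (1 / |t|) with hn | hn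
  · linarith [hhead n hn]
  obtain ⟨J, hJn, hJ, hJ1⟩ :=
    exists_le_and_lt_succ_of_le_of_lt (h0.trans_le (one_div_pos.2 ht').le) hn
  have hsum' : Summable fun j => 1 / u (J + 1 + j) :=
    ((summable_nat_add_iff J).2 hsum).congr fun j => congrArg (fun k => 1 / u k) (by omega)
  have htail := sum_Ico_sinIntegralOsc_le_of_lacunary ht (by linarith) hu
    ((div_le_iff₀' ht').1 hJ1.le) hsum' (hL (J + 1) J.succ_pos) n
  have hcross := sinIntegralOsc_le_three ht (h0 ▸ hu J.zero_le) (hu J.le_succ)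
  rw [← Finset.sum_range_add_sum_Ico _ hJn, Finset.sum_range_succ]
  linarith [hhead J hJ]

/-- Lemma (Móricz): if `(u_j)` (with `u_0 = 0`) satisfies the lacunary condition (L) with
constant `A > 1`, then for `t ≠ 0`,
`Σ_{j≥1} max_{u_{j-1} ≤ v ≤ u_j} |∫_{u_{j-1}}^v sin(tu)/u du| ≤ 3A + 4`
(stated via all partial sums of the nonnegative series). -/
theorem stmt0 (u : ℕ → ℝ) (h0 : u 0 = 0) (hmono : StrictMono u)
    (hpos : ∀ j, 1 ≤ j → 0 < u j) (A : ℝ) (hA : 1 < A)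
    (hsum : Summable fun j : ℕ => 1 / u (j + 1))
    (hL : ∀ m : ℕ, 1 ≤ m → u m * ∑' j : ℕ, 1 / u (m + j) ≤ A)
    (t : ℝ) (ht : t ≠ 0) :
    ∀ n : ℕ, ∑ j ∈ Finset.range n,
      sSup ((fun v : ℝ => |∫ s in (u j)..v, Real.sin (t * s) / s|) ''
        Set.Icc (u j) (u (j + 1))) ≤ 3 * A + 4 :=
  stmt0_general u h0 hmono A hA hsum hL t ht
end
end

section
/- A function f : ℝ² → ℝ belongs to BV_{||0||}(ℝ²) if and only if f belongs to BV_{H₀}(ℝ²); that is, f has bounded Vitali variation and vanishes as ||(x,y)|| → ∞ if and only if f has bounded Hardy variation and for each fixed x, y ∈ ℝ one has f(a, y) → 0 and f(x, b) → 0 as a → ±∞ and b → ±∞. -/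
open Set Filter MeasureTheory Real
open scoped Topology ENNReal

noncomputable section

def rinc (f : ℝ → ℝ → ℝ) (a b c d : ℝ) : ℝ := f b d - f a d - f b c + f a c

lemma vitaliSum_eq (f : ℝ → ℝ → ℝ) (x y : ℕ → ℝ) (n m : ℕ) :
    vitaliSum f x y n m = ∑ i ∈ Finset.range n, ∑ j ∈ Finset.range m,
      |rinc f (x i) (x (i+1)) (y j) (y (j+1))| := rfl

lemma vitaliSum_nonneg (f : ℝ → ℝ → ℝ) (x y : ℕ → ℝ) (n m : ℕ) :
    0 ≤ vitaliSum f x y n m := by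
  apply Finset.sum_nonneg; intro i _
  apply Finset.sum_nonneg; intro j _
  exact abs_nonneg _

lemma ofReal_vitaliSum_le {f : ℝ → ℝ → ℝ} (x y : ℕ → ℝ) (n m : ℕ)
    (hx : ∀ i < n, x i < x (i+1)) (hy : ∀ j < m, y j < y (j+1)) :
    ENNReal.ofReal (vitaliSum f x y n m) ≤ vitaliVar f Set.univ := by
  unfold vitaliVar
  refine le_iSup_of_le n (le_iSup_of_le m (le_iSup_of_le x (le_iSup_of_le y ?_)))
  exact le_iSup_of_le hx (le_iSup_of_le hy (le_iSup_of_le (Set.subset_univ _) le_rfl))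

lemma vitaliSum_le_toReal {f : ℝ → ℝ → ℝ} (hf : BVV f) (x y : ℕ → ℝ) (n m : ℕ)
    (hx : ∀ i < n, x i < x (i+1)) (hy : ∀ j < m, y j < y (j+1)) :
    vitaliSum f x y n m ≤ (vitaliVar f Set.univ).toReal := by
  have h := ofReal_vitaliSum_le (f := f) x y n m hx hy
  have h2 := ENNReal.toReal_mono hf.ne h
  rwa [ENNReal.toReal_ofReal (vitaliSum_nonneg f x y n m)] at h2

section enumF
variable {α : Type*} [LinearOrder α] [Inhabited α]

noncomputable def enumF (S : Finset α) (j : ℕ) : α :=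
  if h : j < S.card then S.orderEmbOfFin rfl ⟨j, h⟩ else default

lemma enumF_strictMono {S : Finset α} {i j : ℕ} (hij : i < j) (hj : j < S.card) :
    enumF S i < enumF S j := by
  have hi : i < S.card := hij.trans hj
  simp only [enumF, dif_pos hi, dif_pos hj]
  exact (S.orderEmbOfFin rfl).strictMono (show (⟨i, hi⟩ : Fin S.card) < ⟨j, hj⟩ from hij)

lemma enumF_mem {S : Finset α} {j : ℕ} (hj : j < S.card) : enumF S j ∈ S := by
  simp only [enumF, dif_pos hj]
  exact Finset.orderEmbOfFin_mem S rfl _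

lemma enumF_surj {S : Finset α} {r : α} (hr : r ∈ S) :
    ∃ j, j < S.card ∧ enumF S j = r := by
  have : r ∈ Set.range (S.orderEmbOfFin rfl) := by
    rw [Finset.range_orderEmbOfFin]; exact hr
  obtain ⟨⟨j, hj⟩, hje⟩ := this
  exact ⟨j, hj, by simp only [enumF, dif_pos hj]; exact hje⟩

lemma enumF_index_lt {S : Finset α} {i j : ℕ} (hi : i < S.card) (hj : j < S.card)
    (h : enumF S i < enumF S j) : i < j := by
  by_contra hc
  push_neg at hc
  rcases eq_or_lt_of_le hc with rfl | hlt
  · exact lt_irrefl _ h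
  · exact absurd h (not_lt.2 (enumF_strictMono hlt hi).le)

lemma enumF_index_le {S : Finset α} {i j : ℕ} (hi : i < S.card) (hj : j < S.card)
    (h : enumF S i ≤ enumF S j) : i ≤ j := by
  by_contra hc
  push_neg at hc
  exact absurd (enumF_strictMono hc hi) (not_lt.2 h)

end enumF

lemma sum_tel (g : ℕ → ℝ) {p q : ℕ} (h : p ≤ q) :
    ∑ i ∈ Finset.Ico p q, (g (i+1) - g i) = g q - g p := by
  rw [Finset.sum_Ico_eq_sub _ h, Finset.sum_range_sub, Finset.sum_range_sub]
  ring

lemma rinc_decomp (f : ℝ → ℝ → ℝ) (x y : ℕ → ℝ) {p q r s : ℕ} (hpq : p ≤ q) (hrs : r ≤ s) :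
    rinc f (x p) (x q) (y r) (y s)
      = ∑ i ∈ Finset.Ico p q, ∑ j ∈ Finset.Ico r s,
          rinc f (x i) (x (i+1)) (y j) (y (j+1)) := by
  have hx : ∀ c d : ℝ, rinc f (x p) (x q) c d
      = ∑ i ∈ Finset.Ico p q, rinc f (x i) (x (i+1)) c d := by
    intro c d
    have h := sum_tel (fun i => f (x i) d - f (x i) c) hpq
    calc rinc f (x p) (x q) c d
        = (f (x q) d - f (x q) c) - (f (x p) d - f (x p) c) := by simp only [rinc]; ring
      _ = ∑ i ∈ Finset.Ico p q,
            ((f (x (i+1)) d - f (x (i+1)) c) - (f (x i) d - f (x i) c)) := h.symm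
      _ = _ := Finset.sum_congr rfl (fun i _ => by simp only [rinc]; ring)
  rw [hx (y r) (y s)]
  refine Finset.sum_congr rfl (fun i _ => ?_)
  have h := sum_tel (fun j => f (x (i+1)) (y j) - f (x i) (y j)) hrs
  calc rinc f (x i) (x (i+1)) (y r) (y s)
      = (f (x (i+1)) (y s) - f (x i) (y s)) - (f (x (i+1)) (y r) - f (x i) (y r)) := by
        simp only [rinc]; ring
    _ = ∑ j ∈ Finset.Ico r s, ((f (x (i+1)) (y (j+1)) - f (x i) (y (j+1)))
          - (f (x (i+1)) (y j) - f (x i) (y j))) := h.symm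
    _ = _ := Finset.sum_congr rfl (fun j _ => by simp only [rinc]; ring)

lemma abs_rinc_le (f : ℝ → ℝ → ℝ) (x y : ℕ → ℝ) {p q r s : ℕ} (hpq : p ≤ q) (hrs : r ≤ s) :
    |rinc f (x p) (x q) (y r) (y s)|
      ≤ ∑ i ∈ Finset.Ico p q, ∑ j ∈ Finset.Ico r s,
          |rinc f (x i) (x (i+1)) (y j) (y (j+1))| := by
  rw [rinc_decomp f x y hpq hrs]
  refine (Finset.abs_sum_le_sum_abs _ _).trans (Finset.sum_le_sum fun i _ => ?_)
  exact Finset.abs_sum_le_sum_abs _ _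

lemma sum_rinc_le {f : ℝ → ℝ → ℝ} (hf : BVV f) (K : ℕ) (a b c d : ℕ → ℝ)
    (hab : ∀ j < K, a j < b j) (hcd : ∀ j < K, c j < d j)
    (hsep : ∀ j, j + 1 < K → b j ≤ a (j+1)) :
    ∑ j ∈ Finset.range K, |rinc f (a j) (b j) (c j) (d j)|
      ≤ (vitaliVar f Set.univ).toReal := by
  rcases Nat.eq_zero_or_pos K with rfl | hK
  · simp
  classical
  set X : Finset ℝ := ((Finset.range K).image a) ∪ ((Finset.range K).image b) with hX
  set Y : Finset ℝ := ((Finset.range K).image c) ∪ ((Finset.range K).image d) with hY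
  have haX : ∀ j < K, a j ∈ X := fun j hj =>
    Finset.mem_union_left _ (Finset.mem_image_of_mem a (Finset.mem_range.2 hj))
  have hbX : ∀ j < K, b j ∈ X := fun j hj =>
    Finset.mem_union_right _ (Finset.mem_image_of_mem b (Finset.mem_range.2 hj))
  have hcY : ∀ j < K, c j ∈ Y := fun j hj =>
    Finset.mem_union_left _ (Finset.mem_image_of_mem c (Finset.mem_range.2 hj))
  have hdY : ∀ j < K, d j ∈ Y := fun j hj =>
    Finset.mem_union_right _ (Finset.mem_image_of_mem d (Finset.mem_range.2 hj))
  set x : ℕ → ℝ := enumF X with hxdef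
  set y : ℕ → ℝ := enumF Y with hydef
  have hXcard : 0 < X.card := Finset.card_pos.2 ⟨a 0, haX 0 hK⟩
  have hYcard : 0 < Y.card := Finset.card_pos.2 ⟨c 0, hcY 0 hK⟩
  set n : ℕ := X.card - 1 with hn
  set m : ℕ := Y.card - 1 with hm
  have hncard : X.card = n + 1 := by omega
  have hmcard : Y.card = m + 1 := by omega
  -- choose index functions
  have hpa : ∀ j, ∃ p, j < K → p < X.card ∧ x p = a j := by
    intro j
    by_cases hj : j < K
    · obtain ⟨p, hp, hpe⟩ := enumF_surj (haX j hj)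
      exact ⟨p, fun _ => ⟨hp, hpe⟩⟩
    · exact ⟨0, fun h => absurd h hj⟩
  have hpb : ∀ j, ∃ p, j < K → p < X.card ∧ x p = b j := by
    intro j
    by_cases hj : j < K
    · obtain ⟨p, hp, hpe⟩ := enumF_surj (hbX j hj)
      exact ⟨p, fun _ => ⟨hp, hpe⟩⟩
    · exact ⟨0, fun h => absurd h hj⟩
  have hpc : ∀ j, ∃ p, j < K → p < Y.card ∧ y p = c j := by
    intro j
    by_cases hj : j < K
    · obtain ⟨p, hp, hpe⟩ := enumF_surj (hcY j hj)
      exact ⟨p, fun _ => ⟨hp, hpe⟩⟩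
    · exact ⟨0, fun h => absurd h hj⟩
  have hpd : ∀ j, ∃ p, j < K → p < Y.card ∧ y p = d j := by
    intro j
    by_cases hj : j < K
    · obtain ⟨p, hp, hpe⟩ := enumF_surj (hdY j hj)
      exact ⟨p, fun _ => ⟨hp, hpe⟩⟩
    · exact ⟨0, fun h => absurd h hj⟩
  choose pa hpa using hpa
  choose pb hpb using hpb
  choose pc hpc using hpc
  choose pd hpd using hpd
  have hpapb : ∀ j, j < K → pa j < pb j := by
    intro j hj
    refine enumF_index_lt (hpa j hj).1 (hpb j hj).1 ?_
    show x (pa j) < x (pb j)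
    rw [(hpa j hj).2, (hpb j hj).2]; exact hab j hj
  have hpcpd : ∀ j, j < K → pc j < pd j := by
    intro j hj
    refine enumF_index_lt (hpc j hj).1 (hpd j hj).1 ?_
    show y (pc j) < y (pd j)
    rw [(hpc j hj).2, (hpd j hj).2]; exact hcd j hj
  -- value chain then index chain
  have hvchain : ∀ j' j, j < j' → j' < K → b j ≤ a j' := by
    intro j'
    induction j' with
    | zero => omega
    | succ t ih =>
      intro j hj hK'
      rcases Nat.lt_succ_iff_lt_or_eq.mp hj with h | h
      · exact le_trans (ih j h (by omega)) (le_trans (hab t (by omega)).le (hsep t hK'))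
      · subst h; exact hsep j hK'
  have hichain : ∀ j' j, j < j' → j' < K → pb j ≤ pa j' := by
    intro j' j hj hK'
    refine enumF_index_le (hpb j (hj.trans hK')).1 (hpa j' hK').1 ?_
    show x (pb j) ≤ x (pa j')
    rw [(hpb j (hj.trans hK')).2, (hpa j' hK').2]
    exact hvchain j' j hj hK'
  set T : ℕ → ℝ := fun i => ∑ j' ∈ Finset.range m,
      |rinc f (x i) (x (i+1)) (y j') (y (j'+1))| with hT
  have hTnn : ∀ i, 0 ≤ T i := fun i =>
    Finset.sum_nonneg fun _ _ => abs_nonneg _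
  have step1 : ∑ j ∈ Finset.range K, |rinc f (a j) (b j) (c j) (d j)|
      ≤ ∑ j ∈ Finset.range K, ∑ i ∈ Finset.Ico (pa j) (pb j), T i := by
    refine Finset.sum_le_sum fun j hj => ?_
    have hj' := Finset.mem_range.1 hj
    have e : |rinc f (a j) (b j) (c j) (d j)|
        = |rinc f (x (pa j)) (x (pb j)) (y (pc j)) (y (pd j))| := by
      rw [(hpa j hj').2, (hpb j hj').2, (hpc j hj').2, (hpd j hj').2]
    rw [e]
    refine (abs_rinc_le f x y (hpapb j hj').le (hpcpd j hj').le).trans ?_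
    refine Finset.sum_le_sum fun i _ => ?_
    refine Finset.sum_le_sum_of_subset_of_nonneg ?_ (fun _ _ _ => abs_nonneg _)
    intro j' hj''
    have h1 := (Finset.mem_Ico.1 hj'').2
    have h2 : pd j < Y.card := (hpd j hj').1
    exact Finset.mem_range.2 (by omega)
  have hdisj : (↑(Finset.range K) : Set ℕ).PairwiseDisjoint
      (fun j => Finset.Ico (pa j) (pb j)) := by
    intro j hj j' hj' hne
    simp only [Finset.coe_range, Set.mem_Iio] at hj hj'
    rcases lt_or_gt_of_ne hne with h | h
    · refine Finset.disjoint_left.2 fun i hi hi' => ?_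
      have h1 := (Finset.mem_Ico.1 hi).2
      have h2 := (Finset.mem_Ico.1 hi').1
      have := hichain j' j h hj'
      omega
    · refine Finset.disjoint_left.2 fun i hi hi' => ?_
      have h1 := (Finset.mem_Ico.1 hi).1
      have h2 := (Finset.mem_Ico.1 hi').2
      have := hichain j j' h hj
      omega
  have step2 : ∑ j ∈ Finset.range K, ∑ i ∈ Finset.Ico (pa j) (pb j), T i
      ≤ ∑ i ∈ Finset.range n, T i := by
    rw [← Finset.sum_biUnion hdisj]
    refine Finset.sum_le_sum_of_subset_of_nonneg ?_ (fun i _ _ => hTnn i)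
    intro i hi
    obtain ⟨j, hj, hij⟩ := Finset.mem_biUnion.1 hi
    have hj' := Finset.mem_range.1 hj
    have h1 := (Finset.mem_Ico.1 hij).2
    have h2 : pb j < X.card := (hpb j hj').1
    exact Finset.mem_range.2 (by omega)
  have step3 : ∑ i ∈ Finset.range n, T i ≤ (vitaliVar f Set.univ).toReal := by
    have hxs : ∀ i < n, x i < x (i+1) := fun i hi =>
      enumF_strictMono (S := X) (Nat.lt_succ_self i) (by omega)
    have hys : ∀ j < m, y j < y (j+1) := fun j hj =>
      enumF_strictMono (S := Y) (Nat.lt_succ_self j) (by omega)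
    have := vitaliSum_le_toReal hf x y n m hxs hys
    rwa [vitaliSum_eq] at this
  linarith

lemma tail_plus {f : ℝ → ℝ → ℝ} (hf : BVV f) {ε : ℝ} (hε : 0 < ε) :
    ∃ R : ℝ, ∀ a b c d : ℝ, R ≤ a → a < b → c < d → |rinc f a b c d| ≤ ε := by
  by_contra hcon
  push_neg at hcon
  have H : ∀ R : ℝ, ∃ q : ℝ × ℝ × ℝ × ℝ, R ≤ q.1 ∧ q.1 < q.2.1 ∧ q.2.2.1 < q.2.2.2 ∧
      ε < |rinc f q.1 q.2.1 q.2.2.1 q.2.2.2| := by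
    intro R
    obtain ⟨a, b, c, d, h1, h2, h3, h4⟩ := hcon R
    exact ⟨⟨a, b, c, d⟩, h1, h2, h3, h4⟩
  let Q : ℕ → ℝ × ℝ × ℝ × ℝ := fun k =>
    Nat.rec (Classical.choose (H 0)) (fun _ p => Classical.choose (H p.2.1)) k
  have hQ : ∀ k, (Q k).1 < (Q k).2.1 ∧ (Q k).2.2.1 < (Q k).2.2.2 ∧
      ε < |rinc f (Q k).1 (Q k).2.1 (Q k).2.2.1 (Q k).2.2.2| := by
    intro k
    cases k with
    | zero =>
      have h := Classical.choose_spec (H 0)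
      exact ⟨h.2.1, h.2.2.1, h.2.2.2⟩
    | succ l =>
      have h := Classical.choose_spec (H (Q l).2.1)
      exact ⟨h.2.1, h.2.2.1, h.2.2.2⟩
  have hQsep : ∀ k, (Q k).2.1 ≤ (Q (k+1)).1 := by
    intro k
    have h := Classical.choose_spec (H (Q k).2.1)
    exact h.1
  obtain ⟨K, hK⟩ := exists_nat_gt ((vitaliVar f Set.univ).toReal / ε)
  have hsum := sum_rinc_le hf K (fun k => (Q k).1) (fun k => (Q k).2.1)
    (fun k => (Q k).2.2.1) (fun k => (Q k).2.2.2)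
    (fun j _ => (hQ j).1) (fun j _ => (hQ j).2.1) (fun j _ => hQsep j)
  have hlow : (K : ℝ) * ε ≤ ∑ j ∈ Finset.range K,
      |rinc f (Q j).1 (Q j).2.1 (Q j).2.2.1 (Q j).2.2.2| := by
    calc (K : ℝ) * ε = ∑ _j ∈ Finset.range K, ε := by
          rw [Finset.sum_const, Finset.card_range, nsmul_eq_mul]
      _ ≤ _ := Finset.sum_le_sum fun j _ => ((hQ j).2.2).le
  have hKV : (vitaliVar f Set.univ).toReal < K * ε := by
    rwa [div_lt_iff₀ hε] at hK
  linarith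

lemma vitaliVar_le_of_sums {g f : ℝ → ℝ → ℝ}
    (h : ∀ (n m : ℕ) (x y : ℕ → ℝ), (∀ i < n, x i < x (i+1)) → (∀ j < m, y j < y (j+1)) →
      ENNReal.ofReal (vitaliSum g x y n m) ≤ vitaliVar f Set.univ) :
    vitaliVar g Set.univ ≤ vitaliVar f Set.univ := by
  unfold vitaliVar
  exact iSup_le fun n => iSup_le fun m => iSup_le fun x => iSup_le fun y =>
    iSup_le fun hx => iSup_le fun hy => iSup_le fun _ => h n m x y hx hy

lemma bvv_transpose {f : ℝ → ℝ → ℝ} (hf : BVV f) : BVV (fun s t => f t s) := by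
  refine lt_of_le_of_lt (vitaliVar_le_of_sums ?_) hf
  intro n m x y hx hy
  have heq : vitaliSum (fun s t => f t s) x y n m = vitaliSum f y x m n := by
    simp only [vitaliSum]
    rw [Finset.sum_comm]
    refine Finset.sum_congr rfl fun j _ => Finset.sum_congr rfl fun i _ => ?_
    congr 1; ring
  rw [heq]
  exact ofReal_vitaliSum_le y x m n hy hx

lemma bvv_reflect {f : ℝ → ℝ → ℝ} (hf : BVV f) : BVV (fun s t => f (-s) t) := by
  refine lt_of_le_of_lt (vitaliVar_le_of_sums ?_) hf
  intro n m x y hx hy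
  set x' : ℕ → ℝ := fun i => -(x (n - i)) with hx'
  have hx's : ∀ i < n, x' i < x' (i+1) := by
    intro i hi
    simp only [hx']
    have h1 : n - (i+1) < n := by omega
    have h2 := hx (n - (i+1)) h1
    have h3 : n - (i+1) + 1 = n - i := by omega
    rw [h3] at h2
    linarith
  have heq : vitaliSum (fun s t => f (-s) t) x y n m = vitaliSum f x' y n m := by
    simp only [vitaliSum]
    refine Finset.sum_nbij' (i := fun i => n - 1 - i) (j := fun i => n - 1 - i)
      ?_ ?_ ?_ ?_ ?_
    · intro i hi; simp only [Finset.mem_range] at *; omega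
    · intro i hi; simp only [Finset.mem_range] at *; omega
    · intro i hi; simp only [Finset.mem_range] at hi
      show n - 1 - (n - 1 - i) = i; omega
    · intro i hi; simp only [Finset.mem_range] at hi
      show n - 1 - (n - 1 - i) = i; omega
    · intro i hi
      simp only [Finset.mem_range] at hi
      refine Finset.sum_congr rfl fun j _ => ?_
      have e1 : x' (n - 1 - i) = -(x (i+1)) := by
        have h1 : n - (n - 1 - i) = i + 1 := by omega
        simp only [hx', h1]
      have e2 : x' (n - 1 - i + 1) = -(x i) := by
        have h1 : n - (n - 1 - i + 1) = i := by omega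
        simp only [hx', h1]
      rw [e1, e2, ← abs_neg]
      congr 1; ring
  rw [heq]
  exact ofReal_vitaliSum_le x' y n m hx's hy

lemma section_bv {f : ℝ → ℝ → ℝ} (hf : BVV f)
    (hv : ∀ x : ℝ, Tendsto (fun N => f x N) atTop (𝓝 0)) (y : ℝ) :
    BoundedVariationOn (fun s => f s y) Set.univ := by
  classical
  set VR : ℝ := (vitaliVar f Set.univ).toReal with hVR
  have key : eVariationOn (fun s => f s y) Set.univ ≤ ENNReal.ofReal VR := by
    unfold eVariationOn
    refine iSup_le ?_
    rintro ⟨n, u, hu, -⟩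
    simp only
    set s' := (Finset.range n).filter (fun i => u i < u (i+1)) with hs'
    have hsum : ∑ i ∈ Finset.range n, edist (f (u (i+1)) y) (f (u i) y)
        = ∑ i ∈ s', edist (f (u (i+1)) y) (f (u i) y) := by
      refine (Finset.sum_filter_of_ne ?_).symm
      intro i _ hne
      by_contra hlt
      have : u i = u (i+1) := le_antisymm (hu (Nat.le_succ i)) (not_lt.1 hlt)
      rw [this] at hne
      exact hne (edist_self _)
    set K := s'.card with hK
    set e : ℕ → ℕ := enumF s' with he
    have hmem : ∀ j < K, u (e j) < u (e j + 1) := by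
      intro j hj
      have := enumF_mem (S := s') (j := j) hj
      exact (Finset.mem_filter.1 this).2
    have hreal : ∑ j ∈ Finset.range K, |f (u (e j + 1)) y - f (u (e j)) y| ≤ VR := by
      have hev : ∀ᶠ N in atTop,
          ∑ j ∈ Finset.range K, |rinc f (u (e j)) (u (e j + 1)) y N| ≤ VR := by
        filter_upwards [eventually_gt_atTop y] with N hN
        refine sum_rinc_le hf K (fun j => u (e j)) (fun j => u (e j + 1))
          (fun _ => y) (fun _ => N) (fun j hj => hmem j hj) (fun _ _ => hN) ?_
        intro j hj
        have h1 : e j < e (j+1) := enumF_strictMono (Nat.lt_succ_self j) hj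
        exact hu h1
      have hlim : Tendsto (fun N => ∑ j ∈ Finset.range K,
          |rinc f (u (e j)) (u (e j + 1)) y N|) atTop
          (𝓝 (∑ j ∈ Finset.range K, |f (u (e j + 1)) y - f (u (e j)) y|)) := by
        refine tendsto_finset_sum _ fun j _ => ?_
        have h1 := hv (u (e j))
        have h2 := hv (u (e j + 1))
        have h3 : Tendsto (fun N => rinc f (u (e j)) (u (e j + 1)) y N) atTop
            (𝓝 (0 - 0 - f (u (e j + 1)) y + f (u (e j)) y)) := by
          simp only [rinc]
          exact ((h2.sub h1).sub_const _).add_const _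
        have h4 := h3.abs
        have h5 : |0 - 0 - f (u (e j + 1)) y + f (u (e j)) y|
            = |f (u (e j + 1)) y - f (u (e j)) y| := by
          rw [show (0:ℝ) - 0 - f (u (e j + 1)) y + f (u (e j)) y
            = -(f (u (e j + 1)) y - f (u (e j)) y) by ring, abs_neg]
        rwa [h5] at h4
      exact le_of_tendsto hlim hev
    have hedist : ∑ i ∈ s', edist (f (u (i+1)) y) (f (u i) y)
        = ∑ j ∈ Finset.range K, edist (f (u (e j + 1)) y) (f (u (e j)) y) := by
      refine (Finset.sum_bij (i := fun j (_ : j ∈ Finset.range K) => e j) ?_ ?_ ?_ ?_).symm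
      · intro j hj
        exact enumF_mem (Finset.mem_range.1 hj)
      · intro j1 hj1 j2 hj2 hee
        by_contra hne
        rcases lt_or_gt_of_ne hne with h | h
        · exact absurd hee (enumF_strictMono h (Finset.mem_range.1 hj2)).ne
        · exact absurd hee.symm (enumF_strictMono h (Finset.mem_range.1 hj1)).ne
      · intro i hi
        obtain ⟨j, hj, hje⟩ := enumF_surj hi
        exact ⟨j, Finset.mem_range.2 hj, hje⟩
      · intro j _; rfl
    calc ∑ i ∈ Finset.range n, edist (f (u (i+1)) y) (f (u i) y)
        = ∑ j ∈ Finset.range K, edist (f (u (e j + 1)) y) (f (u (e j)) y) := by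
          rw [hsum, hedist]
      _ = ENNReal.ofReal (∑ j ∈ Finset.range K, |f (u (e j + 1)) y - f (u (e j)) y|) := by
          rw [ENNReal.ofReal_sum_of_nonneg (fun _ _ => abs_nonneg _)]
          refine Finset.sum_congr rfl fun j _ => ?_
          rw [edist_dist, Real.dist_eq]
      _ ≤ ENNReal.ofReal VR := ENNReal.ofReal_le_ofReal hreal
  exact (lt_of_le_of_lt key ENNReal.ofReal_lt_top).ne

lemma abs_add4 (a b c d : ℝ) : |a + b + c + d| ≤ |a| + |b| + |c| + |d| := by
  have h1 := abs_add_le (a + b + c) d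
  have h2 := abs_add_le (a + b) c
  have h3 := abs_add_le a b
  linarith

lemma tendsto_prod_fst (y : ℝ) {l : Filter ℝ} (hl : l ≤ cocompact ℝ) :
    Tendsto (fun a : ℝ => (a, y)) l (cocompact (ℝ × ℝ)) := by
  rw [← Filter.coprod_cocompact]
  refine Tendsto.mono_right ?_ le_sup_left
  rw [tendsto_comap_iff]
  exact tendsto_id.mono_right hl

lemma tendsto_prod_snd (x : ℝ) {l : Filter ℝ} (hl : l ≤ cocompact ℝ) :
    Tendsto (fun b : ℝ => (x, b)) l (cocompact (ℝ × ℝ)) := by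
  rw [← Filter.coprod_cocompact]
  refine Tendsto.mono_right ?_ le_sup_right
  rw [tendsto_comap_iff]
  exact tendsto_id.mono_right hl

lemma atTop_le_cocompact_real : (atTop : Filter ℝ) ≤ cocompact ℝ := by
  rw [cocompact_eq_atBot_atTop]; exact le_sup_right

lemma atBot_le_cocompact_real : (atBot : Filter ℝ) ≤ cocompact ℝ := by
  rw [cocompact_eq_atBot_atTop]; exact le_sup_left


/-- Characterization: `f ∈ BV_{||0||}(ℝ²)` iff `f ∈ BV_{H₀}(ℝ²)`, i.e. `f` has bounded
Hardy variation and all its one-variable sections tend to `0` at `±∞`. -/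
theorem stmt5 (f : ℝ → ℝ → ℝ) :
    BVzero f ↔
      (BVH f ∧
        (∀ y : ℝ, Tendsto (fun a => f a y) atTop (𝓝 0) ∧
          Tendsto (fun a => f a y) atBot (𝓝 0)) ∧
        (∀ x : ℝ, Tendsto (fun b => f x b) atTop (𝓝 0) ∧
          Tendsto (fun b => f x b) atBot (𝓝 0))) := by
  constructor
  · rintro ⟨hbvv, hten⟩
    have hht : ∀ y, Tendsto (fun a => f a y) atTop (𝓝 0) := fun y =>
      hten.comp (tendsto_prod_fst y atTop_le_cocompact_real)
    have hhb : ∀ y, Tendsto (fun a => f a y) atBot (𝓝 0) := fun y =>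
      hten.comp (tendsto_prod_fst y atBot_le_cocompact_real)
    have hvt : ∀ x, Tendsto (fun b => f x b) atTop (𝓝 0) := fun x =>
      hten.comp (tendsto_prod_snd x atTop_le_cocompact_real)
    have hvb : ∀ x, Tendsto (fun b => f x b) atBot (𝓝 0) := fun x =>
      hten.comp (tendsto_prod_snd x atBot_le_cocompact_real)
    have h1 : ∀ y, BoundedVariationOn (fun s => f s y) Set.univ := fun y =>
      section_bv hbvv hvt y
    have h2 : ∀ x, BoundedVariationOn (fun s => f x s) Set.univ := fun x =>
      section_bv (bvv_transpose hbvv) (fun z => hht z) x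
    exact ⟨⟨hbvv, h1, h2⟩, fun y => ⟨hht y, hhb y⟩, fun x => ⟨hvt x, hvb x⟩⟩
  · rintro ⟨⟨hbvv, -, -⟩, hH, hV⟩
    refine ⟨hbvv, ?_⟩
    rw [Metric.tendsto_nhds]
    intro ε hε
    have hε4 : 0 < ε / 4 := by linarith
    obtain ⟨R₁, hR₁⟩ := tail_plus hbvv hε4
    obtain ⟨R₂, hR₂⟩ := tail_plus (bvv_transpose hbvv) hε4
    obtain ⟨R₃, hR₃⟩ := tail_plus (bvv_reflect hbvv) hε4
    obtain ⟨R₄, hR₄⟩ := tail_plus (bvv_reflect (bvv_transpose hbvv)) hε4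
    set R : ℝ := max (max R₁ R₂) (max R₃ R₄) with hRdef
    have hRR1 : R₁ ≤ R := le_max_of_le_left (le_max_left _ _)
    have hRR2 : R₂ ≤ R := le_max_of_le_left (le_max_right _ _)
    have hRR3 : R₃ ≤ R := le_max_of_le_right (le_max_left _ _)
    have hRR4 : R₄ ≤ R := le_max_of_le_right (le_max_right _ _)
    have hsmallT : ∀ u : ℝ → ℝ, Tendsto u atTop (𝓝 0) → ∀ᶠ t in atTop, |u t| < ε / 4 := by
      intro u hu
      have := Metric.tendsto_nhds.mp hu (ε / 4) hε4
      simpa [Real.dist_eq] using this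
    have hsmallB : ∀ u : ℝ → ℝ, Tendsto u atBot (𝓝 0) → ∀ᶠ t in atBot, |u t| < ε / 4 := by
      intro u hu
      have := Metric.tendsto_nhds.mp hu (ε / 4) hε4
      simpa [Real.dist_eq] using this
    rw [Filter.HasBasis.eventually_iff Filter.hasBasis_cocompact]
    refine ⟨Set.Icc (-R) R ×ˢ Set.Icc (-R) R, isCompact_Icc.prod isCompact_Icc, ?_⟩
    rintro ⟨X, Y⟩ hp
    have hcase : R < X ∨ X < -R ∨ R < Y ∨ Y < -R := by
      by_contra hc
      push_neg at hc
      obtain ⟨h1, h2, h3, h4⟩ := hc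
      exact hp ⟨⟨h2, h1⟩, ⟨h4, h3⟩⟩
    show dist (f X Y) 0 < ε
    rw [Real.dist_eq, sub_zero]
    -- main case analysis
    rcases hcase with hc | hc | hc | hc
    · -- R < X : rectangle [X,M] × [Y,N], right tail
      obtain ⟨N, hN, hNY⟩ := ((hsmallT _ (hV X).1).and (eventually_gt_atTop Y)).exists
      obtain ⟨M, hMY, hMN, hXM⟩ :=
        ((hsmallT _ (hH Y).1).and ((hsmallT _ (hH N).1).and (eventually_gt_atTop X))).exists
      have htail : |rinc f X M Y N| ≤ ε / 4 :=
        hR₁ X M Y N (le_trans hRR1 hc.le) hXM hNY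
      have heq : rinc f X M Y N + -(f M N) + f X N + f M Y = f X Y := by
        simp only [rinc]; ring
      have habs := abs_add4 (rinc f X M Y N) (-(f M N)) (f X N) (f M Y)
      rw [heq, abs_neg] at habs
      have := abs_lt.1 hMN
      have := abs_lt.1 hN
      have := abs_lt.1 hMY
      have := abs_le.1 htail
      linarith
    · -- X < -R : rectangle [M,X] × [Y,N], left tail
      obtain ⟨N, hN, hNY⟩ := ((hsmallT _ (hV X).1).and (eventually_gt_atTop Y)).exists
      obtain ⟨M, hMY, hMN, hMX⟩ :=
        ((hsmallB _ (hH Y).2).and ((hsmallB _ (hH N).2).and (eventually_lt_atBot X))).exists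
      have htail : |rinc f M X Y N| ≤ ε / 4 := by
        have h := hR₃ (-X) (-M) Y N (by linarith) (by linarith [hMX]) hNY
        have heq2 : rinc (fun s t => f (-s) t) (-X) (-M) Y N = -(rinc f M X Y N) := by
          simp only [rinc, neg_neg]; ring
        rwa [heq2, abs_neg] at h
      have heq : -(rinc f M X Y N) + f X N + -(f M N) + f M Y = f X Y := by
        simp only [rinc]; ring
      have habs := abs_add4 (-(rinc f M X Y N)) (f X N) (-(f M N)) (f M Y)
      rw [heq, abs_neg, abs_neg] at habs
      have := abs_lt.1 hMN
      have := abs_lt.1 hN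
      have := abs_lt.1 hMY
      have := abs_le.1 htail
      linarith
    · -- R < Y : rectangle [X,M] × [Y,N], upper tail via transpose
      obtain ⟨N, hN, hNY⟩ := ((hsmallT _ (hV X).1).and (eventually_gt_atTop Y)).exists
      obtain ⟨M, hMY, hMN, hXM⟩ :=
        ((hsmallT _ (hH Y).1).and ((hsmallT _ (hH N).1).and (eventually_gt_atTop X))).exists
      have htail : |rinc f X M Y N| ≤ ε / 4 := by
        have h := hR₂ Y N X M (le_trans hRR2 hc.le) hNY hXM
        have heq2 : rinc (fun s t => f t s) Y N X M = rinc f X M Y N := by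
          simp only [rinc]; ring
        rwa [heq2] at h
      have heq : rinc f X M Y N + -(f M N) + f X N + f M Y = f X Y := by
        simp only [rinc]; ring
      have habs := abs_add4 (rinc f X M Y N) (-(f M N)) (f X N) (f M Y)
      rw [heq, abs_neg] at habs
      have := abs_lt.1 hMN
      have := abs_lt.1 hN
      have := abs_lt.1 hMY
      have := abs_le.1 htail
      linarith
    · -- Y < -R : rectangle [X,M] × [N,Y], lower tail
      obtain ⟨N, hN, hNY⟩ := ((hsmallB _ (hV X).2).and (eventually_lt_atBot Y)).exists
      obtain ⟨M, hMY, hMN, hXM⟩ :=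
        ((hsmallT _ (hH Y).1).and ((hsmallT _ (hH N).1).and (eventually_gt_atTop X))).exists
      have htail : |rinc f X M N Y| ≤ ε / 4 := by
        have h := hR₄ (-Y) (-N) X M (by linarith) (by linarith [hNY]) hXM
        have heq2 : rinc (fun s t => (fun s' t' => f t' s') (-s) t) (-Y) (-N) X M
            = -(rinc f X M N Y) := by
          simp only [rinc, neg_neg]; ring
        rwa [heq2, abs_neg] at h
      have heq : -(rinc f X M N Y) + f M Y + -(f M N) + f X N = f X Y := by
        simp only [rinc]; ring
      have habs := abs_add4 (-(rinc f X M N Y)) (f M Y) (-(f M N)) (f X N)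
      rw [heq, abs_neg, abs_neg] at habs
      have := abs_lt.1 hMN
      have := abs_lt.1 hN
      have := abs_lt.1 hMY
      have := abs_le.1 htail
      linarith
end
end

section
/- The function f(x, y) = (1/x)(1/y) for x, y ≥ 1 and f(x, y) = 0 otherwise belongs to BV_{||0||}(ℝ²) but is not Lebesgue integrable over ℝ². -/
open Set Filter MeasureTheory Real
open scoped Topology ENNReal

noncomputable section

/-- one-dimensional profile -/
def Gfun (t : ℝ) : ℝ := if 1 ≤ t then t⁻¹ else 0

def g1fun (t : ℝ) : ℝ := if 1 ≤ t then 1 else 0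
def g2fun (t : ℝ) : ℝ := if 1 ≤ t then 1 - t⁻¹ else 0

lemma g1_mono : Monotone g1fun := by
  intro a b hab
  unfold g1fun
  split_ifs with ha hb
  · exact le_rfl
  · exact absurd (ha.trans hab) hb
  · exact zero_le_one
  · exact le_rfl

lemma g1_mem (t : ℝ) : 0 ≤ g1fun t ∧ g1fun t ≤ 1 := by
  unfold g1fun; split_ifs <;> norm_num

lemma g2_mem (t : ℝ) : 0 ≤ g2fun t ∧ g2fun t ≤ 1 := by
  unfold g2fun; split_ifs with h
  · have h0 : (0:ℝ) < t := by linarith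
    have : t⁻¹ ≤ 1 := by
      rw [inv_le_one_iff₀]; right; exact h
    have : 0 < t⁻¹ := inv_pos.2 h0
    constructor <;> linarith [show t⁻¹ ≤ 1 by rw [inv_le_one_iff₀]; right; exact h]
  · norm_num

lemma g2_mono : Monotone g2fun := by
  intro a b hab
  by_cases ha : 1 ≤ a
  · have hb : 1 ≤ b := ha.trans hab
    simp only [g2fun, if_pos ha, if_pos hb]
    have : b⁻¹ ≤ a⁻¹ := by
      exact inv_anti₀ (by linarith) hab
    linarith
  · simp only [g2fun, if_neg ha]
    exact (g2_mem b).1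

lemma G_decomp (t : ℝ) : Gfun t = g1fun t - g2fun t := by
  unfold Gfun g1fun g2fun; split_ifs <;> ring

lemma varG (x : ℕ → ℝ) (n : ℕ) (hx : ∀ i < n, x i < x (i+1)) :
    ∑ i ∈ Finset.range n, |Gfun (x (i+1)) - Gfun (x i)| ≤ 2 := by
  have h1 : ∀ i ∈ Finset.range n, |Gfun (x (i+1)) - Gfun (x i)| ≤
      (g1fun (x (i+1)) - g1fun (x i)) + (g2fun (x (i+1)) - g2fun (x i)) := by
    intro i hi
    have hle : x i ≤ x (i+1) := (hx i (Finset.mem_range.1 hi)).le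
    have m1 : g1fun (x i) ≤ g1fun (x (i+1)) := g1_mono hle
    have m2 : g2fun (x i) ≤ g2fun (x (i+1)) := g2_mono hle
    rw [G_decomp, G_decomp]
    rw [abs_sub_le_iff]
    exact ⟨by linarith, by linarith⟩
  calc ∑ i ∈ Finset.range n, |Gfun (x (i+1)) - Gfun (x i)|
      ≤ ∑ i ∈ Finset.range n,
        ((g1fun (x (i+1)) - g1fun (x i)) + (g2fun (x (i+1)) - g2fun (x i))) :=
        Finset.sum_le_sum h1
    _ = (g1fun (x n) - g1fun (x 0)) + (g2fun (x n) - g2fun (x 0)) := by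
        rw [Finset.sum_add_distrib, Finset.sum_range_sub (fun i => g1fun (x i)),
          Finset.sum_range_sub (fun i => g2fun (x i))]
    _ ≤ 2 := by
        have := g1_mem (x n); have := g1_mem (x 0)
        have := g2_mem (x n); have := g2_mem (x 0)
        linarith [ (g1_mem (x n)).2, (g1_mem (x 0)).1, (g2_mem (x n)).2, (g2_mem (x 0)).1 ]




lemma f_eq_prod (s t : ℝ) :
    (if 1 ≤ s ∧ 1 ≤ t then s⁻¹ * t⁻¹ else 0) = Gfun s * Gfun t := by
  unfold Gfun
  by_cases hs : 1 ≤ s <;> by_cases ht : 1 ≤ t <;> simp [hs, ht]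

lemma vitaliSum_le (x y : ℕ → ℝ) (n m : ℕ)
    (hx : ∀ i < n, x i < x (i+1)) (hy : ∀ j < m, y j < y (j+1)) :
    vitaliSum (fun x y => if 1 ≤ x ∧ 1 ≤ y then x⁻¹ * y⁻¹ else 0) x y n m ≤ 4 := by
  have key : vitaliSum (fun x y => if 1 ≤ x ∧ 1 ≤ y then x⁻¹ * y⁻¹ else 0) x y n m
      = (∑ i ∈ Finset.range n, |Gfun (x (i+1)) - Gfun (x i)|) *
        (∑ j ∈ Finset.range m, |Gfun (y (j+1)) - Gfun (y j)|) := by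
    rw [Finset.sum_mul_sum]
    unfold vitaliSum
    refine Finset.sum_congr rfl fun i _ => Finset.sum_congr rfl fun j _ => ?_
    simp only [f_eq_prod]
    rw [← abs_mul]
    ring_nf
  rw [key]
  have h1 := varG x n hx
  have h2 := varG y m hy
  have n1 : (0:ℝ) ≤ ∑ i ∈ Finset.range n, |Gfun (x (i+1)) - Gfun (x i)| :=
    Finset.sum_nonneg fun _ _ => abs_nonneg _
  nlinarith

lemma hBVV : BVV (fun x y => if 1 ≤ x ∧ 1 ≤ y then x⁻¹ * y⁻¹ else 0) := by
  have hle : vitaliVar (fun x y => if 1 ≤ x ∧ 1 ≤ y then x⁻¹ * y⁻¹ else 0) Set.univ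
      ≤ ENNReal.ofReal 4 := by
    unfold vitaliVar
    refine iSup_le fun n => iSup_le fun m => iSup_le fun x => iSup_le fun y =>
      iSup_le fun hx => iSup_le fun hy => iSup_le fun _ => ?_
    exact ENNReal.ofReal_le_ofReal (vitaliSum_le x y n m hx hy)
  exact lt_of_le_of_lt hle ENNReal.ofReal_lt_top

lemma hTendsto :
    Tendsto (fun p : ℝ × ℝ => if 1 ≤ p.1 ∧ 1 ≤ p.2 then p.1⁻¹ * p.2⁻¹ else 0)
      (cocompact (ℝ × ℝ)) (𝓝 0) := by
  rw [Metric.tendsto_nhds]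
  intro ε hε
  set R : ℝ := max 1 (2/ε) with hR
  have hR1 : (1:ℝ) ≤ R := le_max_left _ _
  have hR2 : 2/ε ≤ R := le_max_right _ _
  rw [Filter.hasBasis_cocompact.eventually_iff]
  refine ⟨Set.Icc (-R) R ×ˢ Set.Icc (-R) R,
    (isCompact_Icc.prod isCompact_Icc), fun p hp => ?_⟩
  simp only [Real.dist_eq, sub_zero]
  by_cases h : 1 ≤ p.1 ∧ 1 ≤ p.2
  · obtain ⟨h1, h2⟩ := h
    rw [if_pos ⟨h1, h2⟩]
    have hp1 : 0 < p.1 := by linarith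
    have hp2 : 0 < p.2 := by linarith
    have hval : |p.1⁻¹ * p.2⁻¹| = p.1⁻¹ * p.2⁻¹ := by
      rw [abs_of_nonneg (by positivity)]
    rw [hval]
    have hinv1 : p.1⁻¹ ≤ 1 := by rw [inv_le_one_iff₀]; right; exact h1
    have hinv2 : p.2⁻¹ ≤ 1 := by rw [inv_le_one_iff₀]; right; exact h2
    have hbig : R < p.1 ∨ R < p.2 := by
      by_contra hc
      push_neg at hc
      exact hp ⟨⟨by linarith, hc.1⟩, ⟨by linarith, hc.2⟩⟩
    have hRpos : 0 < R := by linarith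
    have hkey : ∀ z : ℝ, R < z → z⁻¹ < ε := by
      intro z hz
      have hzpos : 0 < z := lt_trans hRpos hz
      have : z⁻¹ < R⁻¹ := by
        exact inv_strictAnti₀ hRpos hz
      have hRinv : R⁻¹ ≤ ε/2 := by
        have h2ε : 0 < 2/ε := by positivity
        calc R⁻¹ ≤ (2/ε)⁻¹ := inv_anti₀ h2ε hR2
          _ = ε/2 := by field_simp
      linarith
    rcases hbig with hb | hb
    · calc p.1⁻¹ * p.2⁻¹ ≤ p.1⁻¹ * 1 := by
            apply mul_le_mul_of_nonneg_left hinv2 (by positivity)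
        _ = p.1⁻¹ := mul_one _
        _ < ε := hkey _ hb
    · calc p.1⁻¹ * p.2⁻¹ ≤ 1 * p.2⁻¹ := by
            apply mul_le_mul_of_nonneg_right hinv1 (by positivity)
        _ = p.2⁻¹ := one_mul _
        _ < ε := hkey _ hb
  · rw [if_neg h]
    simpa using hε

lemma hNotInt :
    ¬ MeasureTheory.Integrable
        (fun p : ℝ × ℝ => if 1 ≤ p.1 ∧ 1 ≤ p.2 then p.1⁻¹ * p.2⁻¹ else 0) := by
  intro hF
  rw [MeasureTheory.Measure.volume_eq_prod] at hF
  have hae := ((MeasureTheory.integrable_prod_iff hF.1).1 hF).1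
  have hae' : ∀ᵐ x ∂(volume.restrict (Set.Ici (1:ℝ))),
      Integrable (fun y => if 1 ≤ x ∧ 1 ≤ y then x⁻¹ * y⁻¹ else 0) :=
    ae_restrict_of_ae hae
  have hne : NeBot (ae (volume.restrict (Set.Ici (1:ℝ)))) := by
    rw [ae_neBot, Ne, Measure.restrict_eq_zero]
    simp [Real.volume_Ici]
  obtain ⟨x, hxint, hx1⟩ :=
    (hae'.and (ae_restrict_mem measurableSet_Ici)).exists
  simp only [Set.mem_Ici] at hx1
  have heq : (fun y => if 1 ≤ x ∧ 1 ≤ y then x⁻¹ * y⁻¹ else 0)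
      = Set.indicator (Set.Ici (1:ℝ)) (fun y => x⁻¹ * y⁻¹) := by
    funext y
    by_cases hy : 1 ≤ y
    · simp [Set.indicator_of_mem, hy, hx1]
    · simp [Set.indicator_of_notMem, hy]
  rw [heq, MeasureTheory.integrable_indicator_iff measurableSet_Ici] at hxint
  have h2 : IntegrableOn (fun y => x⁻¹ * y⁻¹) (Set.Ioi (1:ℝ)) :=
    hxint.mono_set Set.Ioi_subset_Ici_self
  have h3 := h2.const_mul x
  have heq2 : (fun y : ℝ => x * (x⁻¹ * y⁻¹)) = fun y : ℝ => y⁻¹ := by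
    funext y
    rw [← mul_assoc, mul_inv_cancel₀ (by linarith), one_mul]
  rw [heq2] at h3
  exact not_IntegrableOn_Ioi_inv h3


/-- The function `f(x,y) = (1/x)(1/y)` for `x,y ≥ 1`, `0` otherwise, belongs to
`BV_{||0||}(ℝ²)` but is not Lebesgue integrable on `ℝ²`. -/
theorem stmt6 :
    BVzero (fun x y => if 1 ≤ x ∧ 1 ≤ y then x⁻¹ * y⁻¹ else 0) ∧
    ¬ MeasureTheory.Integrable
        (fun p : ℝ × ℝ => if 1 ≤ p.1 ∧ 1 ≤ p.2 then p.1⁻¹ * p.2⁻¹ else 0) := by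
  exact ⟨⟨hBVV, hTendsto⟩, hNotInt⟩
end
end

section
/- Let f ∈ BV_V(ℝ²) and let (x, y) be a point of continuity of f. Then for every ε > 0 there exists δ > 0 such that Var(f, [x−δ, x+δ] × [y−δ, y+δ]) < ε. -/
open Set Filter MeasureTheory Real
open scoped Topology ENNReal

noncomputable section

/-!
Fix `η > 0` and a closed square `Q₀` around `(x, y)` on which `f` stays within `η` of `f x y`.
Since `Var(f, Q₀)` is finite, some grid in `Q₀` has Vitali sum within `ε / 4` of it. At most four
cells of that grid contain `(x, y)`, each with increment at most `4η`. All other cells avoid a small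
open square `Q_ρ` around `(x, y)`, so together with any grid in `Q_ρ` they form a family of
non-overlapping rectangles in `Q₀`. Refining such a family to the grid of all its endpoints shows
that its total increment is at most `Var(f, Q₀)`; hence `Var(f, Q_ρ) ≤ 16η + ε / 4`.
-/

open scoped Finset

/-- The increment `Δf` of `f` over the rectangle `[I.1, I.2] × [J.1, J.2]`. -/
def rectIncr (f : ℝ → ℝ → ℝ) (I J : ℝ × ℝ) : ℝ :=
  f I.2 J.2 - f I.1 J.2 - f I.2 J.1 + f I.1 J.1

lemma vitaliSum_eq_sum_rectIncr (f : ℝ → ℝ → ℝ) (x y : ℕ → ℝ) (n m : ℕ) :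
    vitaliSum f x y n m = ∑ ij ∈ Finset.range n ×ˢ Finset.range m,
      |rectIncr f (x ij.1, x (ij.1 + 1)) (y ij.2, y (ij.2 + 1))| := by
  rw [vitaliSum, Finset.sum_product]
  rfl

lemma rectIncr_eq_sum_Ico (f : ℝ → ℝ → ℝ) (g h : ℕ → ℝ) {a b c d : ℕ} (hab : a ≤ b)
    (hcd : c ≤ d) :
    rectIncr f (g a, g b) (h c, h d) = ∑ ij ∈ Finset.Ico a b ×ˢ Finset.Ico c d,
      rectIncr f (g ij.1, g (ij.1 + 1)) (h ij.2, h (ij.2 + 1)) := by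
  have hrow : ∀ i, ∑ j ∈ Finset.Ico c d, rectIncr f (g i, g (i + 1)) (h j, h (j + 1)) =
      (f (g (i + 1)) (h d) - f (g (i + 1)) (h c)) - (f (g i) (h d) - f (g i) (h c)) := fun i => by
    rw [← sub_sub_sub_comm, ← Finset.sum_Ico_sub (fun j => f (g (i + 1)) (h j) - f (g i) (h j)) hcd]
    exact Finset.sum_congr rfl fun j _ => by simp only [rectIncr]; ring
  rw [Finset.sum_product, Finset.sum_congr rfl fun i _ => hrow i,
    Finset.sum_Ico_sub (fun i => f (g i) (h d) - f (g i) (h c)) hab, rectIncr]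
  ring

lemma abs_rectIncr_le_sum_Ico (f : ℝ → ℝ → ℝ) (g h : ℕ → ℝ) {a b c d : ℕ} (hab : a ≤ b)
    (hcd : c ≤ d) :
    |rectIncr f (g a, g b) (h c, h d)| ≤ ∑ ij ∈ Finset.Ico a b ×ˢ Finset.Ico c d,
      |rectIncr f (g ij.1, g (ij.1 + 1)) (h ij.2, h (ij.2 + 1))| := by
  rw [rectIncr_eq_sum_Ico f g h hab hcd]
  exact Finset.abs_sum_le_sum_abs _ _

lemma abs_rectIncr_le {f : ℝ → ℝ → ℝ} {I J : ℝ × ℝ} {c η : ℝ} (hI : I.1 ≤ I.2) (hJ : J.1 ≤ J.2)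
    (hf : ∀ u ∈ Icc I.1 I.2, ∀ v ∈ Icc J.1 J.2, |f u v - c| ≤ η) :
    |rectIncr f I J| ≤ 4 * η := by
  have h₁ := abs_le.1 (hf I.1 (left_mem_Icc.2 hI) J.1 (left_mem_Icc.2 hJ))
  have h₂ := abs_le.1 (hf I.1 (left_mem_Icc.2 hI) J.2 (right_mem_Icc.2 hJ))
  have h₃ := abs_le.1 (hf I.2 (right_mem_Icc.2 hI) J.1 (left_mem_Icc.2 hJ))
  have h₄ := abs_le.1 (hf I.2 (right_mem_Icc.2 hI) J.2 (right_mem_Icc.2 hJ))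
  rw [rectIncr, abs_le]
  constructor <;> linarith

lemma StrictMono.disjoint_Ioo_iff {g : ℕ → ℝ} (hg : StrictMono g) {i j i' j' : ℕ} :
    Disjoint (Ioo (g i) (g j)) (Ioo (g i') (g j')) ↔
      Disjoint (Finset.Ico i j) (Finset.Ico i' j') := by
  rw [Set.Ioo_disjoint_Ioo, ← Finset.disjoint_coe, Finset.coe_Ico, Finset.coe_Ico,
    Set.Ico_disjoint_Ico, ← hg.monotone.map_min, ← hg.monotone.map_max, hg.le_iff_le]

lemma Finset.exists_strictMono_enum (X : Finset ℝ) :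
    ∃ g : ℕ → ℝ, StrictMono g ∧ ∀ z, z ∈ X ↔ ∃ i < #X, g i = z := by
  -- past `#X` the enumeration continues above `X` only to be strictly monotone on all of `ℕ`
  obtain ⟨M, hM⟩ := X.bddAbove
  set e := X.orderEmbOfFin rfl
  refine ⟨fun i => if h : i < #X then e ⟨i, h⟩ else M + i, strictMono_nat_of_lt_succ fun i => ?_,
    fun z => ⟨fun hz => ?_, ?_⟩⟩
  · by_cases hi : i + 1 < #X
    · simp only [dif_pos hi, dif_pos (Nat.lt_of_succ_lt hi)]
      exact e.strictMono (Fin.mk_lt_mk.2 i.lt_succ_self)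
    · simp only [dif_neg hi]
      push_cast
      split_ifs with h
      · linarith [hM (X.orderEmbOfFin_mem rfl ⟨i, h⟩), (i.cast_nonneg : (0 : ℝ) ≤ i)]
      · linarith
  · obtain ⟨⟨i, hi⟩, rfl⟩ : z ∈ Set.range e := by rwa [X.range_orderEmbOfFin]
    exact ⟨i, hi, dif_pos hi⟩
  · rintro ⟨i, hi, rfl⟩
    simpa only [dif_pos hi] using X.orderEmbOfFin_mem rfl _

lemma ofReal_vitaliSum_le_vitaliVar (f : ℝ → ℝ → ℝ) {Q : Set (ℝ × ℝ)} {n m : ℕ} {x y : ℕ → ℝ}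
    (hx : ∀ i < n, x i < x (i + 1)) (hy : ∀ j < m, y j < y (j + 1))
    (hxy : Icc (x 0) (x n) ×ˢ Icc (y 0) (y m) ⊆ Q) :
    ENNReal.ofReal (vitaliSum f x y n m) ≤ vitaliVar f Q :=
  le_iSup_of_le n <| le_iSup_of_le m <| le_iSup_of_le x <| le_iSup_of_le y <|
    le_iSup_of_le hx <| le_iSup_of_le hy <| le_iSup_of_le hxy le_rfl

lemma vitaliVar_le {f : ℝ → ℝ → ℝ} {Q : Set (ℝ × ℝ)} {C : ℝ≥0∞}
    (h : ∀ (n m : ℕ) (x y : ℕ → ℝ), (∀ i < n, x i < x (i + 1)) → (∀ j < m, y j < y (j + 1)) →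
      Icc (x 0) (x n) ×ˢ Icc (y 0) (y m) ⊆ Q → ENNReal.ofReal (vitaliSum f x y n m) ≤ C) :
    vitaliVar f Q ≤ C :=
  iSup_le fun n => iSup_le fun m => iSup_le fun x => iSup_le fun y =>
    iSup_le fun hx => iSup_le fun hy => iSup_le fun hxy => h n m x y hx hy hxy

lemma vitaliVar_mono (f : ℝ → ℝ → ℝ) {Q Q' : Set (ℝ × ℝ)} (hQ : Q ⊆ Q') :
    vitaliVar f Q ≤ vitaliVar f Q' :=
  vitaliVar_le fun _ _ _ _ hx hy hxy => ofReal_vitaliSum_le_vitaliVar f hx hy (hxy.trans hQ)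

lemma exists_vitaliVar_le_vitaliSum_add {f : ℝ → ℝ → ℝ} {Q : Set (ℝ × ℝ)}
    (hQ : vitaliVar f Q ≠ ⊤) (hne : Q.Nonempty) {e : ℝ} (he : 0 < e) :
    ∃ (n m : ℕ) (x y : ℕ → ℝ), (∀ i < n, x i < x (i + 1)) ∧ (∀ j < m, y j < y (j + 1)) ∧
      Icc (x 0) (x n) ×ˢ Icc (y 0) (y m) ⊆ Q ∧
      vitaliVar f Q ≤ ENNReal.ofReal (vitaliSum f x y n m) + ENNReal.ofReal e := by
  obtain ⟨p, hp⟩ := hne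
  rcases eq_or_ne (vitaliVar f Q) 0 with h0 | h0
  · exact ⟨0, 0, fun _ => p.1, fun _ => p.2, by simp, by simp, by simpa using hp, by simp [h0]⟩
  have hlt : vitaliVar f Q - ENNReal.ofReal e < vitaliVar f Q :=
    ENNReal.sub_lt_self hQ h0 (by simpa using he)
  conv_rhs at hlt => rw [vitaliVar]
  simp only [lt_iSup_iff] at hlt
  obtain ⟨n, m, x, y, hx, hy, hxy, hlt⟩ := hlt
  exact ⟨n, m, x, y, hx, hy, hxy, tsub_le_iff_right.1 hlt.le⟩

structure IsPacking {ι : Type*} (s : Finset ι) (I J : ι → ℝ × ℝ) (Q : Set (ℝ × ℝ)) : Prop where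
  fst_le_snd : ∀ k ∈ s, (I k).1 ≤ (I k).2 ∧ (J k).1 ≤ (J k).2
  subset : ∀ k ∈ s, Icc (I k).1 (I k).2 ×ˢ Icc (J k).1 (J k).2 ⊆ Q
  pairwiseDisjoint :
    (s : Set ι).PairwiseDisjoint fun k => Ioo (I k).1 (I k).2 ×ˢ Ioo (J k).1 (J k).2

namespace IsPacking

variable {ι κ : Type*} {s : Finset ι} {I J : ι → ℝ × ℝ} {Q : Set (ℝ × ℝ)}

lemma mono_finset (h : IsPacking s I J Q) {t : Finset ι} (hts : t ⊆ s) : IsPacking t I J Q where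
  fst_le_snd k hk := h.fst_le_snd k (hts hk)
  subset k hk := h.subset k (hts hk)
  pairwiseDisjoint := h.pairwiseDisjoint.subset (Finset.coe_subset.2 hts)

lemma mono_set (h : IsPacking s I J Q) {Q' : Set (ℝ × ℝ)} (hQ : Q ⊆ Q') : IsPacking s I J Q' where
  fst_le_snd := h.fst_le_snd
  subset k hk := (h.subset k hk).trans hQ
  pairwiseDisjoint := h.pairwiseDisjoint

lemma disjSum (h : IsPacking s I J Q) {t : Finset κ} {I' J' : κ → ℝ × ℝ}
    (h' : IsPacking t I' J' Q) (hst : ∀ k ∈ s, ∀ l ∈ t,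
      Disjoint (Ioo (I k).1 (I k).2 ×ˢ Ioo (J k).1 (J k).2)
        (Ioo (I' l).1 (I' l).2 ×ˢ Ioo (J' l).1 (J' l).2)) :
    IsPacking (s.disjSum t) (Sum.elim I I') (Sum.elim J J') Q where
  fst_le_snd
    | .inl k, hk => h.fst_le_snd k (Finset.inl_mem_disjSum.1 hk)
    | .inr l, hl => h'.fst_le_snd l (Finset.inr_mem_disjSum.1 hl)
  subset
    | .inl k, hk => h.subset k (Finset.inl_mem_disjSum.1 hk)
    | .inr l, hl => h'.subset l (Finset.inr_mem_disjSum.1 hl)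
  pairwiseDisjoint
    | .inl _, hk, .inl _, hk', hne =>
      h.pairwiseDisjoint (Finset.inl_mem_disjSum.1 hk) (Finset.inl_mem_disjSum.1 hk')
        fun e => hne (congrArg _ e)
    | .inl k, hk, .inr l, hl, _ =>
      hst k (Finset.inl_mem_disjSum.1 hk) l (Finset.inr_mem_disjSum.1 hl)
    | .inr l, hl, .inl k, hk, _ =>
      (hst k (Finset.inl_mem_disjSum.1 hk) l (Finset.inr_mem_disjSum.1 hl)).symm
    | .inr _, hl, .inr _, hl', hne =>
      h'.pairwiseDisjoint (Finset.inr_mem_disjSum.1 hl) (Finset.inr_mem_disjSum.1 hl')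
        fun e => hne (congrArg _ e)

lemma mem_Icc {a b c d : ℝ} (h : IsPacking s I J (Icc a b ×ˢ Icc c d)) {k : ι} (hk : k ∈ s) :
    (a ≤ (I k).1 ∧ (I k).1 ≤ (I k).2 ∧ (I k).2 ≤ b) ∧
      (c ≤ (J k).1 ∧ (J k).1 ≤ (J k).2 ∧ (J k).2 ≤ d) := by
  obtain ⟨hI, hJ⟩ := h.fst_le_snd k hk
  obtain ⟨⟨ha, -⟩, hc, -⟩ := h.subset k hk (mk_mem_prod (left_mem_Icc.2 hI) (left_mem_Icc.2 hJ))
  obtain ⟨⟨-, hb⟩, -, hd⟩ :=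
    h.subset k hk (mk_mem_prod (right_mem_Icc.2 hI) (right_mem_Icc.2 hJ))
  exact ⟨⟨ha, hI, hb⟩, hc, hJ, hd⟩

end IsPacking

lemma disjoint_Ioo_succ_of_monotoneOn {z : ℕ → ℝ} {N : ℕ} (hz : MonotoneOn z (Iic N))
    {i i' : ℕ} (hi : i < N) (hi' : i' < N) (hne : i ≠ i') :
    Disjoint (Ioo (z i) (z (i + 1))) (Ioo (z i') (z (i' + 1))) := by
  rw [Set.Ioo_disjoint_Ioo]
  rcases hne.lt_or_gt with h | h
  · exact min_le_of_left_le ((hz (mem_Iic.2 (by omega)) (mem_Iic.2 hi'.le) h).trans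
      (le_max_right _ _))
  · exact min_le_of_right_le ((hz (mem_Iic.2 (by omega)) (mem_Iic.2 hi.le) h).trans
      (le_max_left _ _))

lemma isPacking_cells {n m : ℕ} {x y : ℕ → ℝ} (hx : ∀ i < n, x i < x (i + 1))
    (hy : ∀ j < m, y j < y (j + 1)) :
    IsPacking (Finset.range n ×ˢ Finset.range m) (fun ij => (x ij.1, x (ij.1 + 1)))
      (fun ij => (y ij.2, y (ij.2 + 1))) (Icc (x 0) (x n) ×ˢ Icc (y 0) (y m)) := by
  have hx' := (strictMonoOn_Iic_of_lt_succ hx).monotoneOn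
  have hy' := (strictMonoOn_Iic_of_lt_succ hy).monotoneOn
  refine ⟨fun ij hij => ?_, fun ij hij => ?_, fun ij hij ij' hij' hne => ?_⟩
  · rw [Finset.mem_product, Finset.mem_range, Finset.mem_range] at hij
    exact ⟨(hx _ hij.1).le, (hy _ hij.2).le⟩
  · rw [Finset.mem_product, Finset.mem_range, Finset.mem_range] at hij
    exact Set.prod_mono
      (Icc_subset_Icc (hx' (mem_Iic.2 (Nat.zero_le _)) (mem_Iic.2 hij.1.le) (Nat.zero_le _))
        (hx' (mem_Iic.2 hij.1) (mem_Iic.2 le_rfl) hij.1))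
      (Icc_subset_Icc (hy' (mem_Iic.2 (Nat.zero_le _)) (mem_Iic.2 hij.2.le) (Nat.zero_le _))
        (hy' (mem_Iic.2 hij.2) (mem_Iic.2 le_rfl) hij.2))
  · simp only [Finset.coe_product, Finset.coe_range, Set.mem_prod, Set.mem_Iio] at hij hij'
    rw [Function.onFun, Set.disjoint_prod]
    by_cases h : ij.1 = ij'.1
    · exact .inr (disjoint_Ioo_succ_of_monotoneOn hy' hij.2 hij'.2 fun e => hne (Prod.ext h e))
    · exact .inl (disjoint_Ioo_succ_of_monotoneOn hx' hij.1 hij'.1 h)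

lemma exists_strictMono_of_intervals {ι : Type*} {s : Finset ι} (hs : s.Nonempty)
    {I : ι → ℝ × ℝ} {a b : ℝ} (hI : ∀ k ∈ s, a ≤ (I k).1 ∧ (I k).1 ≤ (I k).2 ∧ (I k).2 ≤ b) :
    ∃ (g : ℕ → ℝ) (N : ℕ) (A B : ι → ℕ), StrictMono g ∧ a ≤ g 0 ∧ g N ≤ b ∧
      ∀ k ∈ s, A k ≤ B k ∧ B k ≤ N ∧ I k = (g (A k), g (B k)) := by
  classical
  set X := s.image (fun k => (I k).1) ∪ s.image fun k => (I k).2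
  obtain ⟨g, hg, hX⟩ := X.exists_strictMono_enum
  have hfst : ∀ k ∈ s, (I k).1 ∈ X := fun k hk =>
    Finset.mem_union_left _ (Finset.mem_image_of_mem _ hk)
  have hsnd : ∀ k ∈ s, (I k).2 ∈ X := fun k hk =>
    Finset.mem_union_right _ (Finset.mem_image_of_mem _ hk)
  have hXab : ∀ z ∈ X, z ∈ Icc a b := by
    simp only [X, Finset.mem_union, Finset.mem_image]
    rintro z (⟨k, hk, rfl⟩ | ⟨k, hk, rfl⟩)
    · exact ⟨(hI k hk).1, (hI k hk).2.1.trans (hI k hk).2.2⟩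
    · exact ⟨(hI k hk).1.trans (hI k hk).2.1, (hI k hk).2.2⟩
  have hpos : 0 < #X := Finset.card_pos.2 ⟨_, hfst _ hs.choose_spec⟩
  choose! idx hidx hgidx using fun z hz => (hX z).1 hz
  refine ⟨g, #X - 1, fun k => idx (I k).1, fun k => idx (I k).2, hg,
    (hXab _ ((hX _).2 ⟨0, hpos, rfl⟩)).1, (hXab _ ((hX _).2 ⟨_, by omega, rfl⟩)).2,
    fun k hk => ⟨?_, ?_, ?_⟩⟩
  · rw [← hg.le_iff_le, hgidx _ (hfst k hk), hgidx _ (hsnd k hk)]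
    exact (hI k hk).2.1
  · have := hidx _ (hsnd k hk)
    exact Nat.le_sub_one_of_lt this
  · rw [hgidx _ (hfst k hk), hgidx _ (hsnd k hk)]

lemma sum_abs_rectIncr_le_vitaliSum {ι : Type*} (f : ℝ → ℝ → ℝ) {s : Finset ι}
    {I J : ι → ℝ × ℝ}
    (hs : (s : Set ι).PairwiseDisjoint fun k => Ioo (I k).1 (I k).2 ×ˢ Ioo (J k).1 (J k).2)
    {g h : ℕ → ℝ} (hg : StrictMono g) (hh : StrictMono h) {N M : ℕ} {A B C D : ι → ℕ}
    (hI : ∀ k ∈ s, A k ≤ B k ∧ B k ≤ N ∧ I k = (g (A k), g (B k)))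
    (hJ : ∀ k ∈ s, C k ≤ D k ∧ D k ≤ M ∧ J k = (h (C k), h (D k))) :
    ∑ k ∈ s, |rectIncr f (I k) (J k)| ≤ vitaliSum f g h N M := by
  set cell := fun ij : ℕ × ℕ => |rectIncr f (g ij.1, g (ij.1 + 1)) (h ij.2, h (ij.2 + 1))|
  set block := fun k => Finset.Ico (A k) (B k) ×ˢ Finset.Ico (C k) (D k)
  have hblock : (s : Set ι).PairwiseDisjoint block := fun k hk l hl hkl => by
    have := hs hk hl hkl
    simp only [Function.onFun, (hI k hk).2.2, (hI l hl).2.2, (hJ k hk).2.2, (hJ l hl).2.2,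
      Set.disjoint_prod, hg.disjoint_Ioo_iff, hh.disjoint_Ioo_iff] at this
    exact Finset.disjoint_product.2 this
  calc ∑ k ∈ s, |rectIncr f (I k) (J k)|
      ≤ ∑ k ∈ s, ∑ ij ∈ block k, cell ij := Finset.sum_le_sum fun k hk => by
        rw [(hI k hk).2.2, (hJ k hk).2.2]
        exact abs_rectIncr_le_sum_Ico f g h (hI k hk).1 (hJ k hk).1
    _ = ∑ ij ∈ s.biUnion block, cell ij := (Finset.sum_biUnion hblock).symm
    _ ≤ ∑ ij ∈ Finset.range N ×ˢ Finset.range M, cell ij := by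
        refine Finset.sum_le_sum_of_subset_of_nonneg (fun ij hij => ?_) fun _ _ _ => abs_nonneg _
        obtain ⟨k, hk, hij⟩ := Finset.mem_biUnion.1 hij
        simp only [block, Finset.mem_product, Finset.mem_Ico, Finset.mem_range] at hij ⊢
        exact ⟨hij.1.2.trans_le (hI k hk).2.1, hij.2.2.trans_le (hJ k hk).2.1⟩
    _ = vitaliSum f g h N M := (vitaliSum_eq_sum_rectIncr f g h N M).symm

theorem IsPacking.ofReal_sum_le_vitaliVar {ι : Type*} (f : ℝ → ℝ → ℝ) {s : Finset ι}
    {I J : ι → ℝ × ℝ} {a b c d : ℝ} (hs : IsPacking s I J (Icc a b ×ˢ Icc c d)) :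
    ENNReal.ofReal (∑ k ∈ s, |rectIncr f (I k) (J k)|) ≤ vitaliVar f (Icc a b ×ˢ Icc c d) := by
  rcases s.eq_empty_or_nonempty with rfl | hne
  · simp
  obtain ⟨g, N, A, B, hg, hag, hgb, hI⟩ :=
    exists_strictMono_of_intervals hne fun k hk => (hs.mem_Icc hk).1
  obtain ⟨h, M, C, D, hh, hch, hhd, hJ⟩ :=
    exists_strictMono_of_intervals hne fun k hk => (hs.mem_Icc hk).2
  exact (ENNReal.ofReal_le_ofReal
    (sum_abs_rectIncr_le_vitaliSum f hs.pairwiseDisjoint hg hh hI hJ)).trans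
    (ofReal_vitaliSum_le_vitaliVar f (fun i _ => hg i.lt_succ_self)
      (fun j _ => hh j.lt_succ_self)
      (Set.prod_mono (Icc_subset_Icc hag hgb) (Icc_subset_Icc hch hhd)))

theorem vitaliVar_add_ofReal_sum_le {ι : Type*} (f : ℝ → ℝ → ℝ) {s : Finset ι}
    {I J : ι → ℝ × ℝ} {a b c d : ℝ} (hs : IsPacking s I J (Icc a b ×ˢ Icc c d))
    {R : Set (ℝ × ℝ)} (hR : R ⊆ Icc a b ×ˢ Icc c d)
    (hsR : ∀ k ∈ s, Disjoint (Ioo (I k).1 (I k).2 ×ˢ Ioo (J k).1 (J k).2) (interior R)) :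
    vitaliVar f R + ENNReal.ofReal (∑ k ∈ s, |rectIncr f (I k) (J k)|) ≤
      vitaliVar f (Icc a b ×ˢ Icc c d) := by
  have hsQ := hs.ofReal_sum_le_vitaliVar f
  rw [← ENNReal.le_sub_iff_add_le_right ENNReal.ofReal_ne_top hsQ]
  refine vitaliVar_le fun n m x y hx hy hxy => ?_
  have hG := isPacking_cells hx hy
  have hGR : ∀ ij ∈ Finset.range n ×ˢ Finset.range m,
      Ioo (x ij.1) (x (ij.1 + 1)) ×ˢ Ioo (y ij.2) (y (ij.2 + 1)) ⊆ interior R := fun ij hij =>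
    interior_maximal ((Set.prod_mono Ioo_subset_Icc_self Ioo_subset_Icc_self).trans
      ((hG.subset ij hij).trans hxy)) (isOpen_Ioo.prod isOpen_Ioo)
  have hsum := (hs.disjSum (hG.mono_set (hxy.trans hR))
    fun k hk ij hij => (hsR k hk).mono_right (hGR ij hij)).ofReal_sum_le_vitaliVar f
  rw [Finset.sum_disjSum, ENNReal.ofReal_add (Finset.sum_nonneg fun _ _ => abs_nonneg _)
    (Finset.sum_nonneg fun _ _ => abs_nonneg _), add_comm] at hsum
  rw [ENNReal.le_sub_iff_add_le_right ENNReal.ofReal_ne_top hsQ, vitaliSum_eq_sum_rectIncr]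
  exact hsum

lemma IsPacking.sum_abs_rectIncr_le {ι : Type*} {f : ℝ → ℝ → ℝ} {s : Finset ι}
    {I J : ι → ℝ × ℝ} {Q : Set (ℝ × ℝ)} (hs : IsPacking s I J Q) {c η : ℝ}
    (hf : ∀ p ∈ Q, |f p.1 p.2 - c| ≤ η) :
    ∑ k ∈ s, |rectIncr f (I k) (J k)| ≤ #s * (4 * η) := by
  rw [← nsmul_eq_mul]
  exact Finset.sum_le_card_nsmul _ _ _ fun k hk =>
    abs_rectIncr_le (hs.fst_le_snd k hk).1 (hs.fst_le_snd k hk).2 fun u hu v hv =>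
      hf _ (hs.subset k hk (mk_mem_prod hu hv))

lemma card_filter_mem_Icc_le_two {x : ℕ → ℝ} {n : ℕ} (hx : ∀ i < n, x i < x (i + 1)) (z : ℝ) :
    #{i ∈ Finset.range n | z ∈ Icc (x i) (x (i + 1))} ≤ 2 := by
  set T := {i ∈ Finset.range n | z ∈ Icc (x i) (x (i + 1))}
  have hx' := strictMonoOn_Iic_of_lt_succ hx
  have hT : ∀ i ∈ T, ∀ j ∈ T, j ≤ i + 1 := by
    intro i hi j hj
    simp only [T, Finset.mem_filter, Finset.mem_range] at hi hj
    by_contra! hij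
    have := hx' (mem_Iic.2 (by omega)) (mem_Iic.2 hj.1.le) hij
    linarith [hi.2.2, hj.2.1]
  rcases T.eq_empty_or_nonempty with hT0 | hne
  · simp [hT0]
  calc #T ≤ #(Finset.Icc (T.min' hne) (T.min' hne + 1)) := Finset.card_le_card fun j hj =>
        Finset.mem_Icc.2 ⟨T.min'_le j hj, hT _ (T.min'_mem hne) j hj⟩
    _ = 2 := by simp only [Nat.card_Icc]; omega

lemma sum_abs_rectIncr_cells_mem_le {f : ℝ → ℝ → ℝ} {n m : ℕ} {x y : ℕ → ℝ}
    (hx : ∀ i < n, x i < x (i + 1)) (hy : ∀ j < m, y j < y (j + 1)) {c η : ℝ} (hη : 0 ≤ η)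
    (hf : ∀ p ∈ Icc (x 0) (x n) ×ˢ Icc (y 0) (y m), |f p.1 p.2 - c| ≤ η) (z w : ℝ) :
    ∑ ij ∈ Finset.range n ×ˢ Finset.range m with
      z ∈ Icc (x ij.1) (x (ij.1 + 1)) ∧ w ∈ Icc (y ij.2) (y (ij.2 + 1)),
      |rectIncr f (x ij.1, x (ij.1 + 1)) (y ij.2, y (ij.2 + 1))| ≤ 16 * η := calc
  _ ≤ #{ij ∈ Finset.range n ×ˢ Finset.range m |
        z ∈ Icc (x ij.1) (x (ij.1 + 1)) ∧ w ∈ Icc (y ij.2) (y (ij.2 + 1))} * (4 * η) :=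
      ((isPacking_cells hx hy).mono_finset (Finset.filter_subset _ _)).sum_abs_rectIncr_le hf
  _ ≤ (2 * 2 : ℕ) * (4 * η) := by
      gcongr
      rw [Finset.filter_product (fun i => z ∈ Icc (x i) (x (i + 1)))
        (fun j => w ∈ Icc (y j) (y (j + 1))), Finset.card_product]
      exact Nat.mul_le_mul (card_filter_mem_Icc_le_two hx z) (card_filter_mem_Icc_le_two hy w)
  _ = 16 * η := by push_cast; ring

lemma eventually_disjoint_Ioo_of_notMem_Icc (x : ℕ → ℝ) (n : ℕ) (z : ℝ) :
    ∀ᶠ ρ in 𝓝[>] 0, ∀ i < n, z ∉ Icc (x i) (x (i + 1)) →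
      Disjoint (Ioo (x i) (x (i + 1))) (Ioo (z - ρ) (z + ρ)) := by
  have hgap : ∀ j ∈ Finset.range (n + 1), ∀ᶠ ρ in 𝓝[>] (0 : ℝ), x j ≠ z → ρ ≤ |x j - z| := by
    intro j _
    by_cases h : x j = z
    · simp [h]
    exact ((eventually_lt_nhds (abs_pos.2 (sub_ne_zero.2 h))).filter_mono nhdsWithin_le_nhds).mono
      fun ρ hρ _ => hρ.le
  filter_upwards [(Filter.eventually_all_finset _).2 hgap] with ρ hρ i hi hz
  rw [Set.Ioo_disjoint_Ioo]
  rcases not_and_or.1 hz with h | h <;> rw [not_le] at h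
  · have := hρ i (by simp; omega) h.ne'
    rw [abs_of_pos (sub_pos.2 h)] at this
    exact min_le_of_right_le (by linarith [le_max_left (x i) (z - ρ)])
  · have := hρ (i + 1) (by simp; omega) h.ne
    rw [abs_of_neg (sub_neg.2 h)] at this
    exact min_le_of_left_le (by linarith [le_max_right (x i) (z - ρ)])

theorem exists_vitaliVar_square_le {f : ℝ → ℝ → ℝ} {x y δ η e : ℝ} (hδ : 0 < δ) (he : 0 < e)
    (hfin : vitaliVar f (Icc (x - δ) (x + δ) ×ˢ Icc (y - δ) (y + δ)) ≠ ⊤)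
    (hosc : ∀ u ∈ Icc (x - δ) (x + δ), ∀ v ∈ Icc (y - δ) (y + δ), |f u v - f x y| ≤ η) :
    ∃ ρ > 0, vitaliVar f (Icc (x - ρ) (x + ρ) ×ˢ Icc (y - ρ) (y + ρ)) ≤
      ENNReal.ofReal (16 * η + e) := by
  have hxy : (x, y) ∈ Icc (x - δ) (x + δ) ×ˢ Icc (y - δ) (y + δ) :=
    ⟨⟨by linarith, by linarith⟩, by linarith, by linarith⟩
  have hη : 0 ≤ η := (abs_nonneg _).trans (hosc x hxy.1 y hxy.2)
  obtain ⟨n, m, px, py, hpx, hpy, hP, hVP⟩ := exists_vitaliVar_le_vitaliSum_add hfin ⟨_, hxy⟩ he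
  obtain ⟨ρ, ⟨⟨hρx, hρy⟩, hρδ⟩, hρ⟩ := ((((eventually_disjoint_Ioo_of_notMem_Icc px n x).and
    (eventually_disjoint_Ioo_of_notMem_Icc py m y)).and
    ((eventually_le_nhds hδ).filter_mono nhdsWithin_le_nhds)).and self_mem_nhdsWithin).exists
  refine ⟨ρ, hρ, ?_⟩
  set cells := Finset.range n ×ˢ Finset.range m
  set Δ := fun ij : ℕ × ℕ => |rectIncr f (px ij.1, px (ij.1 + 1)) (py ij.2, py (ij.2 + 1))|
  set inner := fun ij : ℕ × ℕ =>
    x ∈ Icc (px ij.1) (px (ij.1 + 1)) ∧ y ∈ Icc (py ij.2) (py (ij.2 + 1))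
  set Sin := ∑ ij ∈ cells with inner ij, Δ ij
  set Sout := ∑ ij ∈ cells with ¬ inner ij, Δ ij
  have hin : Sin ≤ 16 * η :=
    sum_abs_rectIncr_cells_mem_le hpx hpy hη (fun p hp => hosc _ (hP hp).1 _ (hP hp).2) x y
  have hout : vitaliVar f (Icc (x - ρ) (x + ρ) ×ˢ Icc (y - ρ) (y + ρ)) + ENNReal.ofReal Sout ≤
      vitaliVar f (Icc (x - δ) (x + δ) ×ˢ Icc (y - δ) (y + δ)) := by
    refine vitaliVar_add_ofReal_sum_le f
      (((isPacking_cells hpx hpy).mono_set hP).mono_finset (Finset.filter_subset _ _))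
      (Set.prod_mono (Icc_subset_Icc (by linarith) (by linarith))
        (Icc_subset_Icc (by linarith) (by linarith))) fun ij hij => ?_
    rw [interior_prod_eq, interior_Icc, interior_Icc, Set.disjoint_prod]
    obtain ⟨hij, hnin⟩ := Finset.mem_filter.1 hij
    rw [Finset.mem_product, Finset.mem_range, Finset.mem_range] at hij
    rcases not_and_or.1 hnin with h | h
    · exact .inl (hρx _ hij.1 h)
    · exact .inr (hρy _ hij.2 h)
  have hsplit : vitaliSum f px py n m = Sin + Sout := by
    rw [vitaliSum_eq_sum_rectIncr, Finset.sum_filter_add_sum_filter_not]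
  have hSout : 0 ≤ Sout := Finset.sum_nonneg fun _ _ => abs_nonneg _
  refine ENNReal.le_of_add_le_add_right (a := ENNReal.ofReal Sout) ENNReal.ofReal_ne_top ?_
  calc _ ≤ _ := hout
    _ ≤ _ := hVP
    _ ≤ ENNReal.ofReal (16 * η + e) + ENNReal.ofReal Sout := by
      rw [← ENNReal.ofReal_add (by rw [hsplit]; positivity) he.le,
        ← ENNReal.ofReal_add (by linarith) hSout, hsplit]
      exact ENNReal.ofReal_le_ofReal (by linarith)

/-- Lemma: if `f ∈ BV_V(ℝ²)` and `(x,y)` is a point of continuity of `f`, then for every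
`ε > 0` there is `δ > 0` with `Var(f, [x−δ,x+δ] × [y−δ,y+δ]) < ε`. -/
theorem stmt8 (f : ℝ → ℝ → ℝ) (hf : BVV f) (x y : ℝ)
    (hc : ContinuousAt (fun p : ℝ × ℝ => f p.1 p.2) (x, y)) :
    ∀ ε > (0 : ℝ), ∃ δ > (0 : ℝ),
      vitaliVar f (Set.Icc (x - δ) (x + δ) ×ˢ Set.Icc (y - δ) (y + δ)) <
        ENNReal.ofReal ε := by
  intro ε hε
  obtain ⟨δ, hδ, hosc⟩ := Metric.nhds_basis_closedBall.eventually_iff.1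
    (hc.eventually (Metric.closedBall_mem_nhds (f x y) (by positivity : 0 < ε / 32)))
  rw [← closedBall_prod_same, Real.closedBall_eq_Icc, Real.closedBall_eq_Icc] at hosc
  obtain ⟨ρ, hρ, hVρ⟩ := exists_vitaliVar_square_le hδ (by positivity : 0 < ε / 4)
    ((vitaliVar_mono f (subset_univ _)).trans_lt hf).ne
    fun u hu v hv => (Real.dist_eq _ _ ▸ hosc (mk_mem_prod hu hv) :)
  exact ⟨ρ, hρ, hVρ.trans_lt ((ENNReal.ofReal_lt_ofReal_iff hε).2 (by linarith))⟩
end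
end
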